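/- arXiv:2102.00167 — 12 statements merged into one kernel-verified Lean document; each statement's English description precedes it below -/
import Mathlib

section
/- An allocation is in the core of a housing market if and only if there is no blocking cycle, i.e., no sequence of distinct agents i_1,...,i_k such that each agent i_l strictly prefers the endowment of i_{l+1} (indices mod k) to her own allotment. -/
/-- `R i a b` means agent `i` weakly prefers object `a` to object `b`. -/
def TotalPref {n : ℕ} (R : Fin n → Fin n → Fin n → Prop) : Prop :=
  ∀ i a b, R i a b ∨ R i b a

def TransPref {n : ℕ} (R : Fin n → Fin n → Fin n → Prop) : Prop :=
  ∀ i a b c, R i a b → R i b c → R i a c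

/-- Strict preference of agent `i`: `a` strictly preferred to `b`. -/
def SPref {n : ℕ} (R : Fin n → Fin n → Fin n → Prop) (i a b : Fin n) : Prop :=
  R i a b ∧ ¬ R i b a

/-- Indifference of agent `i` between `a` and `b`. -/
def Indiff {n : ℕ} (R : Fin n → Fin n → Fin n → Prop) (i a b : Fin n) : Prop :=
  R i a b ∧ R i b a

/-- Preferences are strict: no ties between two distinct acceptable objects. -/
def StrictPrefs {n : ℕ} (R : Fin n → Fin n → Fin n → Prop) : Prop :=
  ∀ i a b, a ≠ b → R i a i → R i b i → ¬ (R i a b ∧ R i b a)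

/-- Some coalition `S` blocks allocation `x` via an allocation `z` with
`{z i : i ∈ S} = S` and `z i` strictly preferred to `x i` for all `i ∈ S`. -/
def Blocks {n : ℕ} (R : Fin n → Fin n → Fin n → Prop) (x : Fin n → Fin n) : Prop :=
  ∃ S : Set (Fin n), S.Nonempty ∧ ∃ z : Fin n → Fin n, Function.Bijective z ∧
    z '' S = S ∧ ∀ i ∈ S, SPref R i (z i) (x i)

/-- `x` is a core allocation. -/
def InCore {n : ℕ} (R : Fin n → Fin n → Fin n → Prop) (x : Fin n → Fin n) : Prop :=
  Function.Bijective x ∧ ¬ Blocks R x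

/-- Some coalition weakly blocks allocation `x`. -/
def WeaklyBlocks {n : ℕ} (R : Fin n → Fin n → Fin n → Prop) (x : Fin n → Fin n) : Prop :=
  ∃ S : Set (Fin n), S.Nonempty ∧ ∃ z : Fin n → Fin n, Function.Bijective z ∧
    z '' S = S ∧ (∀ i ∈ S, R i (z i) (x i)) ∧ ∃ j ∈ S, SPref R j (z j) (x j)

/-- `x` is a strong core allocation. -/
def InStrongCore {n : ℕ} (R : Fin n → Fin n → Fin n → Prop) (x : Fin n → Fin n) : Prop :=
  Function.Bijective x ∧ ¬ WeaklyBlocks R x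

/-- `x` is a competitive allocation: part of a competitive equilibrium `(x, p)`. -/
def IsCompetitive {n : ℕ} (R : Fin n → Fin n → Fin n → Prop) (x : Fin n → Fin n) : Prop :=
  Function.Bijective x ∧ ∃ p : Fin n → ℝ,
    (∀ i, p (x i) ≤ p i) ∧ ∀ i j, SPref R i j (x i) → p i < p j

/-- Some coalition antisymmetrically weakly blocks `x`. -/
def AWBlocks {n : ℕ} (R : Fin n → Fin n → Fin n → Prop) (x : Fin n → Fin n) : Prop :=
  ∃ S : Set (Fin n), S.Nonempty ∧ ∃ z : Fin n → Fin n, Function.Bijective z ∧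
    z '' S = S ∧ (∀ i ∈ S, R i (z i) (x i)) ∧ (∃ j ∈ S, SPref R j (z j) (x j)) ∧
    ∀ i ∈ S, Indiff R i (z i) (x i) → z i = x i

/-- `x` is in the Wako-core (core defined by antisymmetric weak domination). -/
def InWakoCore {n : ℕ} (R : Fin n → Fin n → Fin n → Prop) (x : Fin n → Fin n) : Prop :=
  Function.Bijective x ∧ ¬ AWBlocks R x

/-- `R'` is an improvement for agent `i` with respect to `R`:
(1) agent `i`'s preferences are unchanged; (2) for each `j ≠ i`, object `i`
only moves weakly up among `j`'s acceptable objects; (3) the relative ranking of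
acceptable objects different from `i` is unchanged. -/
def Improvement {n : ℕ} (R R' : Fin n → Fin n → Fin n → Prop) (i : Fin n) : Prop :=
  (∀ a b, R' i a b ↔ R i a b) ∧
  (∀ j, j ≠ i → ∀ k, R j k j →
    (Indiff R j i k → R' j i k) ∧ (SPref R j i k → SPref R' j i k)) ∧
  (∀ j, j ≠ i → ∀ k l, k ≠ i → l ≠ i → R j k j → R j l j → (R j k l ↔ R' j k l))

/-- A blocking cycle for `x`: distinct agents `i₀, …, i_k` with `i_{l+1}`
strictly preferred by `i_l` to her allotment `x i_l` (indices mod `k+1`). -/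
def BlockingCycle {n : ℕ} (R : Fin n → Fin n → Fin n → Prop) (x : Fin n → Fin n) : Prop :=
  ∃ (k : ℕ) (f : Fin (k + 1) → Fin n), Function.Injective f ∧
    ∀ l, SPref R (f l) (f (l + 1)) (x (f l))

/-- An allocation is in the core iff there is no blocking cycle. -/
theorem core_iff_no_blocking_cycle {n : ℕ} (R : Fin n → Fin n → Fin n → Prop)
    (hT : TotalPref R) (htr : TransPref R) (x : Fin n → Fin n)
    (hb : Function.Bijective x) :
    InCore R x ↔ ¬ BlockingCycle R x := by
  classical
  constructor
  · rintro ⟨-, hnb⟩ ⟨k, f, hf, hcyc⟩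
    apply hnb
    refine ⟨Set.range f, ⟨f 0, 0, rfl⟩, ?_⟩
    set z : Fin n → Fin n := fun j => if h : ∃ l, f l = j then f (h.choose + 1) else j with hz
    have hzf : ∀ l, z (f l) = f (l + 1) := by
      intro l
      have h : ∃ l', f l' = f l := ⟨l, rfl⟩
      simp only [hz, dif_pos h]
      rw [hf h.choose_spec]
    have hzn : ∀ j, (¬ ∃ l, f l = j) → z j = j := by
      intro j hj; simp only [hz, dif_neg hj]
    have hzinj : Function.Injective z := by
      intro a b hab
      by_cases ha : ∃ l, f l = a <;> by_cases hb' : ∃ l, f l = b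
      · obtain ⟨la, rfl⟩ := ha; obtain ⟨lb, rfl⟩ := hb'
        rw [hzf, hzf] at hab
        have : la = lb := add_right_cancel (hf hab)
        rw [this]
      · obtain ⟨la, rfl⟩ := ha
        rw [hzf, hzn b hb'] at hab
        exact absurd ⟨la + 1, hab⟩ hb'
      · obtain ⟨lb, rfl⟩ := hb'
        rw [hzf, hzn a ha] at hab
        exact absurd ⟨lb + 1, hab.symm⟩ ha
      · rwa [hzn a ha, hzn b hb'] at hab
    have hzbij : Function.Bijective z := Finite.injective_iff_bijective.mp hzinj
    refine ⟨z, hzbij, ?_, ?_⟩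
    · ext j
      constructor
      · rintro ⟨a, ⟨l, rfl⟩, rfl⟩
        exact ⟨l + 1, (hzf l).symm⟩
      · rintro ⟨m, rfl⟩
        exact ⟨f (m - 1), ⟨m - 1, rfl⟩, by rw [hzf, sub_add_cancel]⟩
    · rintro i ⟨l, rfl⟩
      rw [hzf]
      exact hcyc l
  · intro hnc
    refine ⟨hb, ?_⟩
    rintro ⟨S, ⟨i0, hi0⟩, z, hzbij, hzS, hsp⟩
    apply hnc
    have hzmem : ∀ i ∈ S, z i ∈ S := by
      intro i hi; rw [← hzS]; exact ⟨i, hi, rfl⟩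
    have hiter : ∀ m, z^[m] i0 ∈ S := by
      intro m; induction m with
      | zero => exact hi0
      | succ m ih => rw [Function.iterate_succ_apply']; exact hzmem _ ih
    set σ := Equiv.ofBijective z hzbij with hσ
    have hcoe : ∀ m : ℕ, ⇑(σ ^ m) = z^[m] := by
      intro m
      induction m with
      | zero => rfl
      | succ m ih =>
        funext j
        rw [pow_succ, Equiv.Perm.mul_apply, Function.iterate_succ_apply]
        rw [show σ j = z j from rfl, ih]
    have hper : Function.IsPeriodicPt z (orderOf σ) i0 := by
      show z^[orderOf σ] i0 = i0
      rw [← hcoe, pow_orderOf_eq_one]; rfl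
    have hmp : 0 < Function.minimalPeriod z i0 :=
      hper.minimalPeriod_pos (orderOf_pos σ)
    set m := Function.minimalPeriod z i0 with hm
    refine ⟨m - 1, fun l => z^[l.val] i0, ?_, ?_⟩
    · intro l₁ l₂ h
      have hinj := Function.iterate_injOn_Iio_minimalPeriod (f := z) (x := i0)
      have e1 : l₁.val ∈ Set.Iio (Function.minimalPeriod z i0) := by
        have := l₁.isLt; simp only [Set.mem_Iio, ← hm]; omega
      have e2 : l₂.val ∈ Set.Iio (Function.minimalPeriod z i0) := by
        have := l₂.isLt; simp only [Set.mem_Iio, ← hm]; omega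
      exact Fin.ext (hinj e1 e2 h)
    · intro l
      have key : z^[(l + 1 : Fin (m - 1 + 1)).val] i0 = z (z^[l.val] i0) := by
        have hv : (l + 1 : Fin (m - 1 + 1)).val
            = (l.val + 1) % Function.minimalPeriod z i0 := by
          rw [← hm]
          simp [Fin.add_def]
          congr 1
          omega
        rw [hv, Function.iterate_mod_minimalPeriod_eq,
          Function.iterate_succ_apply']
      show SPref R (z^[l.val] i0) (z^[(l + 1 : Fin (m - 1 + 1)).val] i0)
        (x (z^[l.val] i0))
      rw [key]
      exact hsp _ (hiter _)
end

section
/- In a housing market, the strong core is contained in the set of competitive allocations, and the set of competitive allocations is contained in the core. -/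
section Aux
variable {n : ℕ}

/-- Deduplicate a chain. -/
lemma exists_nodup_chain' {α : Type*} {D : α → α → Prop} {a b : α}
    (h : Relation.ReflTransGen D a b) :
    ∃ L : List α, L ≠ [] ∧ L.Nodup ∧ L.Chain' D ∧ L.head? = some a ∧ L.getLast? = some b := by
  induction h using Relation.ReflTransGen.head_induction_on with
  | refl => exact ⟨[b], by simp, by simp, List.isChain_singleton _, by simp, by simp⟩
  | head hac hcb ih =>
    rename_i a' c'
    obtain ⟨L, hne, hnd, hch, hhead, hlast⟩ := ih
    by_cases haL : a' ∈ L
    · obtain ⟨u, v, rfl⟩ := List.append_of_mem haL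
      refine ⟨a' :: v, by simp, ?_, ?_, by simp, ?_⟩
      · exact hnd.sublist (List.sublist_append_right u (a' :: v))
      · exact (List.isChain_split.mp hch).2
      · rw [← hlast, List.getLast?_append_cons]
    · cases L with
      | nil => exact absurd rfl hne
      | cons c₀ T =>
        have hc : c₀ = c' := by simpa using hhead
        subst hc
        refine ⟨a' :: c₀ :: T, by simp, ?_, ?_, by simp, ?_⟩
        · exact List.nodup_cons.mpr ⟨haL, hnd⟩
        · exact List.isChain_cons_cons.mpr ⟨hac, hch⟩
        · rw [List.getLast?_cons_cons]; exact hlast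

def DRel (R : Fin n → Fin n → Fin n → Prop) (x : Fin n → Fin n) :
    Fin n → Fin n → Prop :=
  fun a b => b = x a ∨ SPref R a b (x a)

lemma dRel_pref {R : Fin n → Fin n → Fin n → Prop} {x : Fin n → Fin n}
    (hrefl : ∀ i a, R i a a) {a b : Fin n} (h : DRel R x a b) : R a b (x a) := by
  rcases h with rfl | h
  · exact hrefl a (x a)
  · exact h.1

lemma reach_block {R : Fin n → Fin n → Fin n → Prop} {x : Fin n → Fin n}
    (hrefl : ∀ i a, R i a a) {i j : Fin n}
    (hs : SPref R i j (x i)) (hr : Relation.ReflTransGen (DRel R x) j i) :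
    WeaklyBlocks R x := by
  obtain ⟨L, hne, hnd, hch, hhead, hlast⟩ := exists_nodup_chain' hr
  have hlen : 0 < L.length := List.length_pos_iff.mpr hne
  have hheadel : L[0]'hlen = j := by
    have := List.head?_eq_getElem? (l := L)
    rw [hhead, List.getElem?_eq_getElem hlen] at this
    exact (Option.some_injective _ this.symm)
  have hlastel : L[L.length - 1]'(by omega) = i := by
    have h1 := List.getLast?_eq_getLast (l := L) hne
    rw [hlast] at h1
    have h2 := List.getLast_eq_getElem (l := L) hne
    rw [← h2]
    exact (Option.some_injective _ h1).symm
  set z := L.formPerm with hz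
  have hzi : z i = j := by
    have hfp := List.formPerm_apply_getElem L hnd (L.length - 1) (by omega)
    have hmod : (L.length - 1 + 1) % L.length = 0 := by
      have : L.length - 1 + 1 = L.length := by omega
      simp [this]
    rw [hlastel] at hfp
    rw [← hz] at hfp
    rw [hfp]
    simp only [hmod]
    exact hheadel
  have hstep : ∀ t (ht : t + 1 < L.length), DRel R x (L[t]'(by omega)) (z (L[t]'(by omega))) := by
    intro t ht
    have hfp := List.formPerm_apply_getElem L hnd t (by omega)
    have hmod : (t + 1) % L.length = t + 1 := Nat.mod_eq_of_lt ht
    rw [← hz] at hfp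
    rw [hfp]
    simp only [hmod]
    have := List.isChain_iff_getElem.mp hch t (by omega)
    simpa using this
  set S : Set (Fin n) := {a | a ∈ L} with hS
  have hSfin : S.Finite := Set.toFinite S
  have hmapsTo : Set.MapsTo z S S := fun a ha => List.formPerm_apply_mem_of_mem ha
  have hbijOn : Set.BijOn z S S :=
    (hSfin.injOn_iff_bijOn_of_mapsTo hmapsTo).mp (z.injective.injOn)
  have himg : z '' S = S := hbijOn.image_eq
  have hweak : ∀ a ∈ S, R a (z a) (x a) := by
    intro a ha
    obtain ⟨t, ht, rfl⟩ := List.mem_iff_getElem.mp ha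
    rcases Nat.lt_or_ge (t + 1) L.length with h1 | h1
    · exact dRel_pref hrefl (hstep t h1)
    · have e1 : L[t]'ht = i := by rw [← hlastel]; congr 1; omega
      rw [e1, hzi]
      exact hs.1
  have hiS : i ∈ S := by rw [← hlastel]; exact List.getElem_mem _
  exact ⟨S, ⟨i, hiS⟩, z, z.bijective, himg, hweak, i, hiS, by rw [hzi]; exact hs⟩

lemma reach_iterate {R : Fin n → Fin n → Fin n → Prop} {x : Fin n → Fin n} :
    ∀ (m : ℕ) (a : Fin n), Relation.ReflTransGen (DRel R x) a (x^[m] a) := by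
  intro m
  induction m with
  | zero => intro a; exact .refl
  | succ m ih =>
    intro a
    rw [Function.iterate_succ_apply']
    exact (ih a).tail (Or.inl rfl)

lemma reach_back {R : Fin n → Fin n → Fin n → Prop} {x : Fin n → Fin n}
    (hb : Function.Bijective x) (a : Fin n) :
    Relation.ReflTransGen (DRel R x) (x a) a := by
  set e : Equiv.Perm (Fin n) := Equiv.ofBijective x hb with he
  have hpow : ∀ (m : ℕ) (b : Fin n), (e ^ m) b = x^[m] b := by
    intro m
    induction m with
    | zero => intro b; simp
    | succ m ih =>
      intro b
      rw [pow_succ, Equiv.Perm.mul_apply, Function.iterate_succ_apply, ih]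
      rfl
  have hk : 0 < orderOf e := orderOf_pos e
  obtain ⟨m, hm⟩ : ∃ m, orderOf e = m + 1 := ⟨orderOf e - 1, by omega⟩
  have hfix : x^[m] (x a) = a := by
    have h1 : (e ^ orderOf e) a = a := by rw [pow_orderOf_eq_one]; rfl
    rw [hpow] at h1
    rw [← Function.iterate_succ_apply]
    rw [hm] at h1
    exact h1
  have := reach_iterate (R := R) (x := x) m (x a)
  rwa [hfix] at this

end Aux
/-- The strong core is contained in the set of competitive allocations, which
is contained in the core. -/
theorem strongCore_subset_competitive_subset_core {n : ℕ}
    (R : Fin n → Fin n → Fin n → Prop) (hT : TotalPref R) (htr : TransPref R)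
    (x : Fin n → Fin n) :
    (InStrongCore R x → IsCompetitive R x) ∧ (IsCompetitive R x → InCore R x) := by
  classical
  have hrefl : ∀ i a, R i a a := fun i a => (hT i a a).elim id id
  constructor
  · rintro ⟨hbij, hnb⟩
    refine ⟨hbij, ?_⟩
    set Reach : Fin n → Fin n → Prop := Relation.ReflTransGen (DRel R x) with hRdef
    set p : Fin n → ℝ :=
      fun i => -(((Finset.univ.filter (fun v => Reach i v)).card : ℕ) : ℝ) with hp
    refine ⟨p, ?_, ?_⟩
    · intro i
      have h1 : Reach i (x i) := Relation.ReflTransGen.single (Or.inl rfl)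
      have h2 : Reach (x i) i := reach_back hbij i
      have hiff : ∀ v, Reach (x i) v ↔ Reach i v :=
        fun v => ⟨fun h => Relation.ReflTransGen.trans h1 h,
                  fun h => Relation.ReflTransGen.trans h2 h⟩
      have hfe : (Finset.univ.filter fun v => Reach (x i) v)
          = Finset.univ.filter fun v => Reach i v := by
        apply Finset.filter_congr
        intro v _
        simp [hiff v]
      simp only [hp, hfe, le_refl]
    · intro i j hsij
      have hij : Reach i j := Relation.ReflTransGen.single (Or.inr hsij)
      have hnotji : ¬ Reach j i := fun h => hnb (reach_block hrefl hsij h)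
      have hsub : (Finset.univ.filter fun v => Reach j v)
          ⊆ Finset.univ.filter fun v => Reach i v := by
        intro v hv
        simp only [Finset.mem_filter, Finset.mem_univ, true_and] at hv ⊢
        exact Relation.ReflTransGen.trans hij hv
      have hss : (Finset.univ.filter fun v => Reach j v)
          ⊂ Finset.univ.filter fun v => Reach i v := by
        refine (Finset.ssubset_iff_of_subset hsub).mpr ⟨i, ?_, ?_⟩
        · simp only [Finset.mem_filter, Finset.mem_univ, true_and]
          exact Relation.ReflTransGen.refl
        · simp only [Finset.mem_filter, Finset.mem_univ, true_and]
          exact hnotji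
      have hcard := Finset.card_lt_card hss
      simp only [hp]
      have : ((Finset.univ.filter fun v => Reach j v).card : ℝ)
          < ((Finset.univ.filter fun v => Reach i v).card : ℝ) := by exact_mod_cast hcard
      linarith
  · rintro ⟨hbij, p, hp1, hp2⟩
    refine ⟨hbij, ?_⟩
    rintro ⟨S, hSne, z, hzb, hzS, hpref⟩
    set T := (Set.toFinite S).toFinset with hT'
    have hmem : ∀ a, a ∈ T ↔ a ∈ S := fun a => Set.Finite.mem_toFinset _
    have hTne : T.Nonempty := ⟨hSne.choose, (hmem _).mpr hSne.choose_spec⟩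
    have hlt : ∀ a ∈ T, p a < p (z a) := fun a ha => hp2 a (z a) (hpref a ((hmem a).mp ha))
    have hsum2 : ∑ a ∈ T, p (z a) = ∑ a ∈ T, p a := by
      apply Finset.sum_bij (fun a _ => z a)
      · intro a ha
        rw [hmem] at ha ⊢
        rw [← hzS]
        exact ⟨a, ha, rfl⟩
      · intro a _ b _ h
        exact hzb.1 h
      · intro b hb
        rw [hmem, ← hzS] at hb
        obtain ⟨a, ha, rfl⟩ := hb
        exact ⟨a, (hmem a).mpr ha, rfl⟩
      · intro a _
        rfl
    have hlt2 := Finset.sum_lt_sum_of_nonempty hTne hlt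
    rw [hsum2] at hlt2
    exact lt_irrefl _ hlt2
end

section
/- If (x,p) is a competitive equilibrium of a housing market, then p_{x_i} = p_i for every agent i, i.e., each agent receives an object with price exactly equal to the price of her endowment. -/
/-- In a competitive equilibrium `(x, p)`, each agent receives an object with
price exactly equal to the price of her endowment. -/
theorem competitive_equilibrium_prices_equal {n : ℕ}
    (R : Fin n → Fin n → Fin n → Prop) (x : Fin n → Fin n)
    (hb : Function.Bijective x) (p : Fin n → ℝ)
    (h1 : ∀ i, p (x i) ≤ p i)
    (h2 : ∀ i j, SPref R i j (x i) → p i < p j) :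
    ∀ i, p (x i) = p i := by
  have hsum : ∑ i, p (x i) = ∑ i, p i :=
    Equiv.sum_comp (Equiv.ofBijective x hb) p
  intro i
  exact (Finset.sum_eq_sum_iff_of_le (fun i _ => h1 i)).mp hsum i
    (Finset.mem_univ i)
end

section
/- In a housing market with strict preferences, the strong core contains at most one allocation: any two strong core allocations are equal. -/
/-!
Let `f` give each agent the better of its two houses under `x` and `z`. A cycle `C` of `f`
is a coalition trading among itself; nobody on `C` is worse off than under `x`, so, `x`
being in the strong core, nobody on `C` strictly prefers its `z`-house, i.e. `f = x` on `C`.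
Then `C` trades among itself under `x` as well, and by strictness every agent of `C` with
`x ≠ z` strictly prefers its `x`-house, so `z` being in the strong core forces `x = z` on `C`.
Removing `C` leaves a smaller market closed under both `x` and `z`, and we conclude by induction.
-/

open Set Function

theorem Set.MapsTo.exists_bijOn_subset {α : Type*} [Finite α] {f : α → α} {U : Set α}
    (hU : U.Nonempty) (hf : MapsTo f U U) : ∃ C ⊆ U, C.Nonempty ∧ BijOn f C C := by
  obtain ⟨C, hCU, hC⟩ :=
    exists_minimal_le_of_wellFoundedLT (fun C : Set α ↦ C.Nonempty ∧ MapsTo f C C) U ⟨hU, hf⟩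
  have himage : f '' C ⊆ C := hC.prop.2.image_subset
  have hsurj : SurjOn f C C :=
    hC.le_of_le ⟨hC.prop.1.image f, fun _ hy ↦ mem_image_of_mem f (himage hy)⟩ himage
  exact ⟨C, hCU, hC.prop.1, (toFinite C).surjOn_iff_bijOn_of_mapsTo hC.prop.2 |>.mp hsurj⟩

theorem Set.MapsTo.sdiff_of_bijOn {α : Type*} {f : α → α} {U C : Set α} (hU : MapsTo f U U)
    (hf : Injective f) (hC : BijOn f C C) : MapsTo f (U \ C) (U \ C) := by
  refine fun j hj ↦ ⟨hU hj.1, fun hfj ↦ hj.2 ?_⟩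
  obtain ⟨c, hc, hcj⟩ := hC.surjOn hfj
  exact hf hcj ▸ hc

section HousingMarket

variable {n : ℕ} {R : Fin n → Fin n → Fin n → Prop}

theorem TotalPref.refl (hT : TotalPref R) (i a : Fin n) : R i a a :=
  (hT i a a).elim id id

theorem TotalPref.of_not_sPref (hT : TotalPref R) {i a b : Fin n} (h : ¬ SPref R i a b) :
    R i b a :=
  (hT i b a).elim id fun hab ↦ by_contra fun hba ↦ h ⟨hab, hba⟩

theorem StrictPrefs.sPref_of_ne (hs : StrictPrefs R) {i a b : Fin n} (ha : R i a i)
    (hb : R i b i) (hab : a ≠ b) (h : R i a b) : SPref R i a b :=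
  ⟨h, fun hba ↦ hs i a b hab ha hb ⟨h, hba⟩⟩

theorem weaklyBlocks_of_bijOn {x v : Fin n → Fin n} {C : Set (Fin n)} (hC : C.Nonempty)
    (hv : BijOn v C C) (hweak : ∀ i ∈ C, R i (v i) (x i))
    (hstrict : ∃ j ∈ C, SPref R j (v j) (x j)) : WeaklyBlocks R x := by
  classical
  have hbij : Bijective (C.piecewise v id) :=
    Finite.injective_iff_bijective.mp <| (injective_piecewise_iff (s := C)).mpr
      ⟨hv.injOn, injective_id.injOn, fun i hi j hj (hij : v i = j) ↦ hj (hij ▸ hv.mapsTo hi)⟩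
  have heq : EqOn (C.piecewise v id) v C := piecewise_eqOn C v id
  obtain ⟨j, hj, hjs⟩ := hstrict
  exact ⟨C, hC, _, hbij, (heq.image_eq).trans hv.image_eq,
    fun i hi ↦ heq hi ▸ hweak i hi, j, hj, heq hj ▸ hjs⟩

theorem InStrongCore.acceptable (hT : TotalPref R) {x : Fin n → Fin n} (hx : InStrongCore R x)
    (i : Fin n) : R i (x i) i := by
  by_contra h
  refine hx.2 (weaklyBlocks_of_bijOn (singleton_nonempty i) (bijOn_id _) ?_ ⟨i, rfl, ?_⟩)
  · rintro _ rfl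
    exact hT.of_not_sPref fun hs ↦ h hs.1
  · exact ⟨(hT i i (x i)).resolve_right h, h⟩

theorem InStrongCore.exists_bijOn_eqOn (hT : TotalPref R) (hs : StrictPrefs R)
    {x z : Fin n → Fin n} (hx : InStrongCore R x) (hz : InStrongCore R z) {U : Set (Fin n)}
    (hU : U.Nonempty) (hxU : MapsTo x U U) (hzU : MapsTo z U U) :
    ∃ C ⊆ U, C.Nonempty ∧ BijOn x C C ∧ EqOn x z C := by
  classical
  set f : Fin n → Fin n := fun j ↦ if SPref R j (z j) (x j) then z j else x j
  have hfU : MapsTo f U U := fun j hj ↦ by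
    by_cases h : SPref R j (z j) (x j) <;> simp only [f, h, if_true, if_false]
    exacts [hzU hj, hxU hj]
  obtain ⟨C, hCU, hC, hfC⟩ := hfU.exists_bijOn_subset hU
  have hnot : ∀ j ∈ C, ¬ SPref R j (z j) (x j) := by
    refine fun j hj hj' ↦ hx.2 (weaklyBlocks_of_bijOn hC hfC (fun i _ ↦ ?_) ⟨j, hj, ?_⟩)
    · by_cases h : SPref R i (z i) (x i) <;> simp only [f, h, if_true, if_false]
      exacts [h.1, hT.refl i (x i)]
    · rwa [show f j = z j from if_pos hj']
  have hfx : EqOn f x C := fun j hj ↦ if_neg (hnot j hj)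
  have hxC : BijOn x C C := hfC.congr hfx
  refine ⟨C, hCU, hC, hxC, fun j hj ↦ by_contra fun hne ↦ hz.2 ?_⟩
  exact weaklyBlocks_of_bijOn hC hxC (fun i hi ↦ hT.of_not_sPref (hnot i hi))
    ⟨j, hj, hs.sPref_of_ne (hx.acceptable hT j) (hz.acceptable hT j) hne
      (hT.of_not_sPref (hnot j hj))⟩

theorem InStrongCore.eqOn_of_mapsTo (hT : TotalPref R) (hs : StrictPrefs R)
    {x z : Fin n → Fin n} (hx : InStrongCore R x) (hz : InStrongCore R z) (U : Set (Fin n))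
    (hxU : MapsTo x U U) (hzU : MapsTo z U U) : EqOn x z U := by
  induction U using WellFoundedLT.induction with
  | ind U ih =>
    rcases U.eq_empty_or_nonempty with rfl | hU
    · exact eqOn_empty x z
    obtain ⟨C, hCU, hC, hxC, hxz⟩ := hx.exists_bijOn_eqOn hT hs hz hU hxU hzU
    have hrest : EqOn x z (U \ C) :=
      ih _ (hCU.sdiff_ssubset_of_nonempty hC) (hxU.sdiff_of_bijOn hx.1.1 hxC)
        (hzU.sdiff_of_bijOn hz.1.1 (hxC.congr hxz))
    exact union_sdiff_cancel hCU ▸ hxz.union hrest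

theorem strongCore_unique_of_strict_general {n : ℕ} (R : Fin n → Fin n → Fin n → Prop)
    (hT : TotalPref R) (hs : StrictPrefs R)
    (x z : Fin n → Fin n) (hx : InStrongCore R x) (hz : InStrongCore R z) :
    x = z :=
  funext fun i ↦ hx.eqOn_of_mapsTo hT hs hz univ (mapsTo_univ x univ) (mapsTo_univ z univ)
    (mem_univ i)

/-- With strict preferences, any two strong core allocations are equal. -/
theorem strongCore_unique_of_strict {n : ℕ} (R : Fin n → Fin n → Fin n → Prop)
    (hT : TotalPref R) (htr : TransPref R) (hs : StrictPrefs R)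
    (x z : Fin n → Fin n) (hx : InStrongCore R x) (hz : InStrongCore R z) :
    x = z :=
  strongCore_unique_of_strict_general R hT hs x z hx hz

end HousingMarket
end

section
/- In a housing market (possibly with indifferences), any two strong core allocations are welfare-equivalent: if x and z are both strong core allocations, then every agent i is indifferent between x_i and z_i. -/
section AuxiliaryForStrongCore

/-- Auxiliary: from reflexive-transitive reachability one can extract a
duplicate-free chain. -/
lemma exists_nodup_path_aux {α : Type*} [DecidableEq α] (r : α → α → Prop) {a b : α}
    (h : Relation.ReflTransGen r a b) :
    ∃ L : List α, L.Chain' r ∧ L.Nodup ∧ L.head? = some a ∧ L.getLast? = some b := by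
  induction h with
  | refl => exact ⟨[a], List.isChain_singleton a, by simp, by simp, by simp⟩
  | @tail b c hab hbc ih =>
    obtain ⟨L, hch, hnd, hhd, hlast⟩ := ih
    by_cases hc : c ∈ L
    · have hlt : L.idxOf c < L.length := List.idxOf_lt_length_iff.2 hc
      refine ⟨L.take (L.idxOf c + 1), hch.take _, hnd.sublist (L.take_sublist _), ?_, ?_⟩
      · cases L with
        | nil => simp at hhd
        | cons a' t => simpa using hhd
      · rw [List.getLast?_take]
        simp [List.getElem?_eq_getElem hlt, List.getElem_idxOf hlt]
    · refine ⟨L ++ [c], hch.append (by simp) ?_, (by simp [List.nodup_append, hnd, hc]; exact fun a ha h => hc (h ▸ ha)), ?_, by simp⟩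
      · intro p hp q hq
        simp only [List.head?_cons, Option.mem_def, Option.some.injEq] at hq
        rw [hlast] at hp
        simp only [Option.mem_def, Option.some.injEq] at hp
        subst hp; subst hq; exact hbc
      · cases L with
        | nil => simp at hhd
        | cons a' t => simpa using hhd

/-- Auxiliary: a reachability path whose steps are all weakly acceptable against the
allocation `y`, ending at an agent that strictly prefers the start object, yields a
weakly blocking coalition (the cycle formed by the path). -/
lemma weaklyBlocks_of_reach_aux {n : ℕ} (R : Fin n → Fin n → Fin n → Prop) (y : Fin n → Fin n)
    (r : Fin n → Fin n → Prop) (hacc : ∀ u v, r u v → R u v (y u))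
    {b c : Fin n} (hs : SPref R b c (y b)) (hr : Relation.ReflTransGen r c b) :
    WeaklyBlocks R y := by
  obtain ⟨L, hch, hnd, hhd, hlast⟩ := exists_nodup_path_aux r hr
  have hLne : L ≠ [] := by rintro rfl; simp at hhd
  have hl0 : 0 < L.length := List.length_pos_iff.2 hLne
  have hbeq : L.getLast hLne = b := by
    rw [List.getLast?_eq_getLast_of_ne_nil hLne] at hlast
    exact Option.some_inj.mp hlast
  have hceq : L.head hLne = c := by
    rw [List.head?_eq_head hLne] at hhd
    exact Option.some_inj.mp hhd
  have hbL : b ∈ L := hbeq ▸ List.getLast_mem hLne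
  have h1 : L[L.length - 1]'(by omega) = b := by rw [← hbeq, List.getLast_eq_getElem]
  have h0 : L[0]'hl0 = c := by rw [← hceq, List.head_eq_getElem]
  have hwb : L.formPerm b = c := by
    rw [← h1, List.formPerm_apply_getElem L hnd _ (by omega)]
    have hidx : (L.length - 1 + 1) % L.length = 0 := by
      rw [Nat.sub_add_cancel hl0, Nat.mod_self]
    simp only [hidx]
    exact h0
  refine ⟨{v | v ∈ L}, ⟨b, hbL⟩, ⇑L.formPerm, L.formPerm.bijective, ?_, ?_, b, hbL, ?_⟩
  · ext v
    constructor
    · rintro ⟨u, hu, rfl⟩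
      exact List.formPerm_apply_mem_of_mem hu
    · intro hv
      refine ⟨L.formPerm.symm v, ?_, by simp⟩
      apply List.mem_of_formPerm_apply_mem
      simpa using hv
  · intro i hi
    obtain ⟨k, hk, rfl⟩ := List.getElem_of_mem hi
    rw [List.formPerm_apply_getElem L hnd k hk]
    by_cases hk1 : k + 1 < L.length
    · simp only [Nat.mod_eq_of_lt hk1]
      have := List.isChain_iff_getElem.1 hch k (by omega)
      try simp only [List.get_eq_getElem] at this
      exact hacc _ _ this
    · have hkeq : (k + 1) % L.length = 0 := by
        have : k + 1 = L.length := by omega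
        rw [this, Nat.mod_self]
      simp only [hkeq]
      have hkb : L[k] = b := by rw [← h1]; congr 1; omega
      rw [h0, hkb]
      exact hs.1
  · rw [hwb]; exact hs

end AuxiliaryForStrongCore

/-- Any two strong core allocations are welfare-equivalent. -/
theorem strongCore_welfare_equivalent {n : ℕ} (R : Fin n → Fin n → Fin n → Prop)
    (hT : TotalPref R) (htr : TransPref R)
    (x z : Fin n → Fin n) (hx : InStrongCore R x) (hz : InStrongCore R z) :
    ∀ i, Indiff R i (x i) (z i) := by
  classical
  obtain ⟨hxb, hxnb⟩ := hx
  obtain ⟨hzb, hznb⟩ := hz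
  intro i0
  by_contra hni
  set r : Fin n → Fin n → Prop :=
    fun u v => (v = x u ∧ ¬ SPref R u (z u) (x u)) ∨ (v = z u ∧ ¬ SPref R u (x u) (z u))
    with hrdef
  have haccx : ∀ u v, r u v → R u v (x u) := by
    rintro u v (⟨rfl, h⟩ | ⟨rfl, h⟩)
    · exact (hT u (x u) (x u)).elim id id
    · rcases hT u (z u) (x u) with h' | h'
      · exact h'
      · by_contra h''
        exact h ⟨h', h''⟩
  have haccz : ∀ u v, r u v → R u v (z u) := by
    rintro u v (⟨rfl, h⟩ | ⟨rfl, h⟩)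
    · rcases hT u (x u) (z u) with h' | h'
      · exact h'
      · by_contra h''
        exact h ⟨h', h''⟩
    · exact (hT u (z u) (z u)).elim id id
  have F1 : ∀ b, SPref R b (z b) (x b) → ¬ Relation.ReflTransGen r (z b) b :=
    fun b hb hreach => hxnb (weaklyBlocks_of_reach_aux R x r haccx hb hreach)
  have F2 : ∀ a, SPref R a (x a) (z a) → ¬ Relation.ReflTransGen r (x a) a :=
    fun a ha hreach => hznb (weaklyBlocks_of_reach_aux R z r haccz ha hreach)
  have hAB : SPref R i0 (x i0) (z i0) ∨ SPref R i0 (z i0) (x i0) := by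
    rcases hT i0 (x i0) (z i0) with h | h
    · exact Or.inl ⟨h, fun h' => hni ⟨h, h'⟩⟩
    · exact Or.inr ⟨h, fun h' => hni ⟨h', h⟩⟩
  let Rch : Fin n → Finset (Fin n) :=
    fun u => Finset.univ.filter (fun v => Relation.ReflTransGen r u v)
  have hmem : ∀ u v, v ∈ Rch u ↔ Relation.ReflTransGen r u v := by
    intro u v; simp [Rch]
  obtain ⟨v0, hv0, hmin⟩ := Finset.exists_min_image (Rch i0) (fun v => (Rch v).card)
    ⟨i0, (hmem i0 i0).2 Relation.ReflTransGen.refl⟩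
  have hTsub : ∀ w ∈ Rch v0, Rch w = Rch v0 := by
    intro w hw
    have h1 : Rch w ⊆ Rch v0 := fun u hu =>
      (hmem _ _).2 (((hmem _ _).1 hw).trans ((hmem _ _).1 hu))
    have h2 : w ∈ Rch i0 := (hmem _ _).2 (((hmem _ _).1 hv0).trans ((hmem _ _).1 hw))
    exact Finset.eq_of_subset_of_card_le h1 (hmin w h2)
  have hstep : ∀ u v, u ∈ Rch v0 → r u v → v ∈ Rch v0 := fun u v hu h =>
    (hmem _ _).2 (Relation.ReflTransGen.tail ((hmem _ _).1 hu) h)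
  have hTB : ∀ u ∈ Rch v0, ¬ SPref R u (z u) (x u) := by
    intro u hu hB
    have hnA : ¬ SPref R u (x u) (z u) := fun hA => hB.2 hA.1
    have hz1 : z u ∈ Rch v0 := hstep u (z u) hu (Or.inr ⟨rfl, hnA⟩)
    have hu' : u ∈ Rch (z u) := by rw [hTsub _ hz1]; exact hu
    exact F1 u hB ((hmem _ _).1 hu')
  have hTA : ∀ u ∈ Rch v0, ¬ SPref R u (x u) (z u) := by
    intro u hu hA
    have hnB : ¬ SPref R u (z u) (x u) := fun hB => hB.2 hA.1
    have hx1 : x u ∈ Rch v0 := hstep u (x u) hu (Or.inl ⟨rfl, hnB⟩)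
    have hu' : u ∈ Rch (x u) := by rw [hTsub _ hx1]; exact hu
    exact F2 u hA ((hmem _ _).1 hu')
  have hxT : ∀ u ∈ Rch v0, x u ∈ Rch v0 := fun u hu =>
    hstep u (x u) hu (Or.inl ⟨rfl, hTB u hu⟩)
  have hzT : ∀ u ∈ Rch v0, z u ∈ Rch v0 := fun u hu =>
    hstep u (z u) hu (Or.inr ⟨rfl, hTA u hu⟩)
  have hxim : (Rch v0).image x = Rch v0 :=
    Finset.eq_of_subset_of_card_le
      (fun v hv => by
        obtain ⟨u, hu, rfl⟩ := Finset.mem_image.1 hv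
        exact hxT u hu)
      (le_of_eq (Finset.card_image_of_injective _ hxb.1).symm)
  have hzim : (Rch v0).image z = Rch v0 :=
    Finset.eq_of_subset_of_card_le
      (fun v hv => by
        obtain ⟨u, hu, rfl⟩ := Finset.mem_image.1 hv
        exact hzT u hu)
      (le_of_eq (Finset.card_image_of_injective _ hzb.1).symm)
  have hxpre : ∀ u, x u ∈ Rch v0 → u ∈ Rch v0 := by
    intro u hu
    rw [← hxim] at hu
    obtain ⟨t, ht, he⟩ := Finset.mem_image.1 hu
    rwa [← hxb.1 he]
  have hzpre : ∀ u, z u ∈ Rch v0 → u ∈ Rch v0 := by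
    intro u hu
    rw [← hzim] at hu
    obtain ⟨t, ht, he⟩ := Finset.mem_image.1 hu
    rwa [← hzb.1 he]
  have hi0T : i0 ∈ Rch v0 := by
    have h0 : Relation.ReflTransGen r i0 v0 := (hmem _ _).1 hv0
    refine Relation.ReflTransGen.head_induction_on h0 ((hmem _ _).2 Relation.ReflTransGen.refl) ?_
    rintro a c (⟨rfl, -⟩ | ⟨rfl, -⟩) hcv hcT
    · exact hxpre a hcT
    · exact hzpre a hcT
  rcases hAB with hA | hB
  · exact hTA i0 hi0T hA
  · exact hTB i0 hi0T hB
end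

section
/- Let x be an individually rational allocation of a housing market with acceptability graph G=(N,E). Then x is in the core if and only if there exist integer prices p_i in {1,...,n} such that for every edge (i,j) in E: p_i + 1 <= p_j + n * [x_i R_i j], where [x_i R_i j] equals 1 if agent i weakly prefers x_i to j and 0 otherwise. -/
open scoped Classical

private lemma chain'_getElem' {α : Type*} {r : α → α → Prop} {l : List α} (h : List.Chain' r l)
    (k : ℕ) (hk : k + 1 < l.length) : r (l[k]'(by omega)) l[k+1] := by
  rw [show List.Chain' r l = List.IsChain r l from rfl, List.isChain_iff_getElem] at h
  simpa using h k (by omega)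

private lemma exists_nodup_cycle_aux {α : Type*} {r : α → α → Prop} :
    ∀ (N : ℕ) (a : α) (l : List α), l.length ≤ N → List.Chain r a (l ++ [a]) →
      ∃ (b : α) (m : List α), (b :: m).Nodup ∧ List.Chain r b (m ++ [b]) := by
  intro N
  induction N with
  | zero =>
    intro a l hlen hch
    have : l = [] := List.eq_nil_of_length_eq_zero (Nat.le_zero.1 hlen)
    subst this
    exact ⟨a, [], by simp, hch⟩
  | succ N ih =>
    intro a l hlen hch
    by_cases hnd : (a :: l).Nodup
    · exact ⟨a, l, hnd, hch⟩
    · obtain ⟨b, hdup⟩ := List.exists_duplicate_iff_not_nodup.2 hnd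
      have hsub : List.Sublist [b, b] (a :: l) := List.duplicate_iff_sublist.1 hdup
      rw [show ([b, b] : List α) = b :: [b] from rfl, List.cons_sublist_iff] at hsub
      obtain ⟨r₁, r₂, heq, hb1, hb2⟩ := hsub
      obtain ⟨s, t, rfl⟩ := List.append_of_mem hb1
      have hb2' : b ∈ r₂ := hb2.subset (List.mem_singleton_self b)
      obtain ⟨u, v, rfl⟩ := List.append_of_mem hb2'
      have hw : List.Chain' r ((a :: l) ++ [a]) := hch
      have hinf : List.IsInfix (b :: ((t ++ u) ++ b :: (v ++ [a]))) ((a :: l) ++ [a]) := by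
        refine ⟨s, [], ?_⟩
        rw [heq]; simp
      have hw2 : List.Chain' r (b :: ((t ++ u) ++ b :: (v ++ [a]))) := hw.infix hinf
      have hc2 : List.Chain r b ((t ++ u) ++ b :: (v ++ [a])) := hw2
      have hkey : List.Chain r b ((t ++ u) ++ [b]) := (List.isChain_cons_split.1 hc2).1
      have hlen' : (t ++ u).length ≤ N := by
        have := congrArg List.length heq
        simp at this
        simp
        omega
      exact ih b (t ++ u) hlen' hkey

private lemma cycle_blocks {n : ℕ} {R : Fin n → Fin n → Fin n → Prop} (hT : TotalPref R)
    (htr : TransPref R) {x : Fin n → Fin n} (hIR : ∀ i, R i (x i) i)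
    {b : Fin n} {m : List (Fin n)} (hnd : (b :: m).Nodup)
    (hch : List.Chain (fun i j => R i j i ∧ ¬ R i (x i) j) b (m ++ [b])) :
    Blocks R x := by
  set r : Fin n → Fin n → Prop := fun i j => R i j i ∧ ¬ R i (x i) j with hr
  set cyc : List (Fin n) := b :: m with hc
  have hclen : 0 < cyc.length := by simp [hc]
  -- edges along the cycle
  have hwch : List.Chain' r (cyc ++ [b]) := hch
  have hedge : ∀ k : Fin cyc.length,
      r (cyc.get k) (cyc.get ⟨(k.1 + 1) % cyc.length, Nat.mod_lt _ hclen⟩) := by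
    rintro ⟨k, hk⟩
    simp only [List.get_eq_getElem]
    have h1 : k + 1 < (cyc ++ [b]).length := by simp at hk ⊢; omega
    have h2 := chain'_getElem' hwch k h1
    have e1 : (cyc ++ [b])[k] = cyc[k] := List.getElem_append_left hk
    rcases Nat.lt_or_ge (k + 1) cyc.length with hlt | hge
    · have e2 : (cyc ++ [b])[k + 1] = cyc[k + 1] := List.getElem_append_left hlt
      have e3 : (k + 1) % cyc.length = k + 1 := Nat.mod_eq_of_lt hlt
      rw [e1, e2] at h2
      convert h2 using 2
    · have hkeq : k + 1 = cyc.length := by omega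
      have e2 : (cyc ++ [b])[k + 1] = b := by
        rw [List.getElem_append_right (by omega)]
        simp [hkeq]
      have e4 : cyc[(k + 1) % cyc.length]'(Nat.mod_lt _ hclen) = b := by
        have e3 : (k + 1) % cyc.length = 0 := by rw [hkeq, Nat.mod_self]
        simp only [e3]
        simp [hc]
      rw [e1, e2] at h2
      rw [e4]
      exact h2
  -- the permutation
  set z : Equiv.Perm (Fin n) := cyc.formPerm with hz
  have hmem : ∀ i ∈ cyc, r i (z i) := by
    intro i hi
    obtain ⟨k, rfl⟩ := List.mem_iff_get.1 hi
    have h1 := List.formPerm_apply_getElem cyc hnd k.1 k.isLt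
    have h2 := hedge k
    simp only [List.get_eq_getElem] at h2 ⊢
    rw [hz, h1]
    exact h2
  refine ⟨{i | i ∈ cyc}, ⟨b, by simp [hc]⟩, z, z.bijective, ?_, ?_⟩
  · ext y
    constructor
    · rintro ⟨i, hi, rfl⟩
      exact List.formPerm_apply_mem_of_mem hi
    · intro hy
      refine ⟨z.symm y, ?_, z.apply_symm_apply y⟩
      by_contra hns
      have : z (z.symm y) = z.symm y := List.formPerm_apply_of_notMem hns
      rw [z.apply_symm_apply] at this
      exact hns (by rw [← this]; exact hy)
  · intro i hi
    obtain ⟨hacc, hndom⟩ := hmem i hi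
    have : R i (z i) (x i) := (hT i (z i) (x i)).resolve_right hndom
    exact ⟨this, hndom⟩

/-- IP characterisation of the core: an individually rational allocation `x`
is in the core iff there are integer prices in `{1, …, n}` such that for each
edge `(i,j)` of the acceptability graph,
`p i + 1 ≤ p j + n * [x i R_i j]`. -/
theorem core_iff_IP_prices {n : ℕ} (R : Fin n → Fin n → Fin n → Prop)
    (hT : TotalPref R) (htr : TransPref R) (x : Fin n → Fin n)
    (hb : Function.Bijective x) (hIR : ∀ i, R i (x i) i) :
    InCore R x ↔ ∃ p : Fin n → ℤ, (∀ i, 1 ≤ p i ∧ p i ≤ (n : ℤ)) ∧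
      ∀ i j, R i j i →
        p i + 1 ≤ p j + (n : ℤ) * (if R i (x i) j then 1 else 0) := by
  classical
  set r : Fin n → Fin n → Prop := fun i j => R i j i ∧ ¬ R i (x i) j with hr
  constructor
  · rintro ⟨-, hnb⟩
    -- acyclicity of r
    have hacyc : ∀ a, ¬ Relation.TransGen r a a := by
      intro a ha
      -- build a closed walk
      have hwalk : ∀ {a b : Fin n}, Relation.TransGen r a b →
          ∃ l : List (Fin n), List.Chain r a (l ++ [b]) := by
        intro a b h
        induction h with
        | single h => exact ⟨[], List.Chain.cons h List.Chain.nil⟩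
        | tail _ h ih =>
          obtain ⟨l, hl⟩ := ih
          rename_i bb cc _
          refine ⟨l ++ [bb], ?_⟩
          have : List.Chain r a (l ++ bb :: [cc]) :=
            List.isChain_cons_split.2 ⟨hl, List.Chain.cons h List.Chain.nil⟩
          simpa using this
      obtain ⟨l, hl⟩ := hwalk ha
      obtain ⟨b, m, hnd, hch⟩ := exists_nodup_cycle_aux l.length a l le_rfl hl
      exact hnb (cycle_blocks hT htr hIR hnd hch)
    -- define prices
    refine ⟨fun i => 1 + ((Finset.univ.filter (fun j => Relation.TransGen r j i)).card : ℤ),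
      ?_, ?_⟩
    · intro i
      dsimp only
      constructor
      · have : (0 : ℤ) ≤ ((Finset.univ.filter (fun j => Relation.TransGen r j i)).card : ℤ) := by
          positivity
        omega
      · have hsub : (Finset.univ.filter (fun j => Relation.TransGen r j i)) ⊆
            Finset.univ.erase i := by
          intro j hj
          simp only [Finset.mem_filter, Finset.mem_univ, true_and] at hj
          refine Finset.mem_erase.2 ⟨?_, Finset.mem_univ j⟩
          rintro rfl
          exact hacyc j hj
        have hcard := Finset.card_le_card hsub
        have herase : (Finset.univ.erase i).card = n - 1 := by
          rw [Finset.card_erase_of_mem (Finset.mem_univ i)]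
          simp
        have hn : 1 ≤ n := i.pos
        rw [herase] at hcard
        have : ((Finset.univ.filter (fun j => Relation.TransGen r j i)).card : ℤ) ≤ (n : ℤ) - 1 := by
          have : ((Finset.univ.filter (fun j => Relation.TransGen r j i)).card : ℤ) ≤ ((n - 1 : ℕ) : ℤ) := by
            exact_mod_cast hcard
          rw [Nat.cast_sub hn] at this
          simpa using this
        omega
    · intro i j hij
      dsimp only
      by_cases hx : R i (x i) j
      · simp only [if_pos hx, mul_one]
        -- trivial bound: p i ≤ n and 1 ≤ p j
        have hsub : (Finset.univ.filter (fun k => Relation.TransGen r k i)) ⊆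
            Finset.univ.erase i := by
          intro k hk
          simp only [Finset.mem_filter, Finset.mem_univ, true_and] at hk
          refine Finset.mem_erase.2 ⟨?_, Finset.mem_univ k⟩
          rintro rfl
          exact hacyc k hk
        have hcard := Finset.card_le_card hsub
        have herase : (Finset.univ.erase i).card = n - 1 := by
          rw [Finset.card_erase_of_mem (Finset.mem_univ i)]
          simp
        have hn : 1 ≤ n := i.pos
        rw [herase] at hcard
        have h1 : ((Finset.univ.filter (fun k => Relation.TransGen r k i)).card : ℤ) ≤ (n : ℤ) - 1 := by
          have : ((Finset.univ.filter (fun k => Relation.TransGen r k i)).card : ℤ) ≤ ((n - 1 : ℕ) : ℤ) := by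
            exact_mod_cast hcard
          rw [Nat.cast_sub hn] at this
          simpa using this
        have h2 : (0 : ℤ) ≤ ((Finset.univ.filter (fun k => Relation.TransGen r k j)).card : ℤ) := by
          positivity
        omega
      · simp only [if_neg hx, mul_zero]
        have hrij : r i j := ⟨hij, hx⟩
        have hss : (Finset.univ.filter (fun k => Relation.TransGen r k i)) ⊂
            (Finset.univ.filter (fun k => Relation.TransGen r k j)) := by
          constructor
          · intro k hk
            simp only [Finset.mem_filter, Finset.mem_univ, true_and] at hk ⊢
            exact hk.tail hrij
          · intro hsub
            have hi : i ∈ Finset.univ.filter (fun k => Relation.TransGen r k j) := by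
              simp only [Finset.mem_filter, Finset.mem_univ, true_and]
              exact Relation.TransGen.single hrij
            have := hsub hi
            simp only [Finset.mem_filter, Finset.mem_univ, true_and] at this
            exact hacyc i this
        have hcard := Finset.card_lt_card hss
        have : ((Finset.univ.filter (fun k => Relation.TransGen r k i)).card : ℤ) <
            ((Finset.univ.filter (fun k => Relation.TransGen r k j)).card : ℤ) := by
          exact_mod_cast hcard
        omega
  · rintro ⟨p, hp, hineq⟩
    refine ⟨hb, ?_⟩
    rintro ⟨S, hSne, z, hzb, hzS, hzpref⟩
    have hSfin : S.Finite := Set.toFinite S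
    set F : Finset (Fin n) := hSfin.toFinset with hF
    have hFmem : ∀ i, i ∈ F ↔ i ∈ S := fun i => hSfin.mem_toFinset
    have hFne : F.Nonempty := by
      obtain ⟨i, hi⟩ := hSne
      exact ⟨i, (hFmem i).2 hi⟩
    have hstep : ∀ i ∈ F, p i + 1 ≤ p (z i) := by
      intro i hi
      have hiS : i ∈ S := (hFmem i).1 hi
      obtain ⟨h1, h2⟩ := hzpref i hiS
      have hacc : R i (z i) i := htr i (z i) (x i) i h1 (hIR i)
      have := hineq i (z i) hacc
      rw [if_neg h2] at this
      simpa using this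
    have hsum : ∑ i ∈ F, p (z i) = ∑ i ∈ F, p i := by
      refine Finset.sum_nbij z ?_ ?_ ?_ ?_
      · intro i hi
        have hiS : i ∈ S := (hFmem i).1 hi
        have : z i ∈ S := by
          rw [← hzS]; exact ⟨i, hiS, rfl⟩
        exact (hFmem (z i)).2 this
      · intro i _ j _ hij
        exact hzb.1 hij
      · intro y hy
        have hyS : y ∈ S := (hFmem y).1 hy
        rw [← hzS] at hyS
        obtain ⟨i, hiS, rfl⟩ := hyS
        exact ⟨i, by simpa using (hFmem i).2 hiS, rfl⟩
      · intro i _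
        rfl
    have hsum2 : ∑ i ∈ F, (p i + 1) ≤ ∑ i ∈ F, p (z i) :=
      Finset.sum_le_sum hstep
    rw [hsum, Finset.sum_add_distrib] at hsum2
    simp only [Finset.sum_const, nsmul_eq_mul, mul_one] at hsum2
    have hcard : (0 : ℤ) < (F.card : ℤ) := by
      exact_mod_cast Finset.card_pos.2 hFne
    omega
end

section
/- Let x be an individually rational allocation with associated indicator variables y_{ij} (y_{ij}=1 iff x_i = j). Then x is a competitive allocation if and only if there exist integer prices p_i in {1,...,n} satisfying, for every edge (i,j) of the acceptability graph: (a) p_i + 1 <= p_j + n * (sum over k with k R_i j of y_{ik}), and (b) p_i <= p_j + n * (1 - y_{ij}). Moreover, any such prices together with x constitute a competitive equilibrium. -/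
open scoped Classical

/-- If `x` is a bijection and `p (x i) ≤ p i` pointwise, then equality holds pointwise. -/
lemma perm_price_eq {n : ℕ} {M : Type*} [AddCommMonoid M] [LinearOrder M] [IsOrderedCancelAddMonoid M]
    (p : Fin n → M) (x : Fin n → Fin n) (hb : Function.Bijective x)
    (h : ∀ i, p (x i) ≤ p i) : ∀ i, p (x i) = p i := by
  have hsum : ∑ i, p (x i) = ∑ i, p i :=
    Fintype.sum_bijective x hb _ _ (fun i => rfl)
  intro i
  by_contra hne
  have hlt : p (x i) < p i := lt_of_le_of_ne (h i) hne
  have : ∑ j, p (x j) < ∑ j, p j :=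
    Finset.sum_lt_sum (fun j _ => h j) ⟨i, Finset.mem_univ i, hlt⟩
  exact absurd hsum (ne_of_lt this)

/-- IP characterisation of competitive allocations: an individually rational
allocation `x` (with indicators `y i j = [x i = j]`) is competitive iff there
are integer prices in `{1, …, n}` satisfying constraints (a) and (b) on every
edge of the acceptability graph; moreover, any such prices together with `x`
form a competitive equilibrium. -/
theorem competitive_iff_IP_prices {n : ℕ} (R : Fin n → Fin n → Fin n → Prop)
    (hT : TotalPref R) (htr : TransPref R) (x : Fin n → Fin n)
    (hb : Function.Bijective x) (hIR : ∀ i, R i (x i) i) :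
    (IsCompetitive R x ↔ ∃ p : Fin n → ℤ, (∀ i, 1 ≤ p i ∧ p i ≤ (n : ℤ)) ∧
      (∀ i j, R i j i →
        p i + 1 ≤ p j + (n : ℤ) * ∑ k, (if R i k j ∧ x i = k then (1 : ℤ) else 0)) ∧
      (∀ i j, R i j i →
        p i ≤ p j + (n : ℤ) * (1 - (if x i = j then (1 : ℤ) else 0)))) ∧
    (∀ p : Fin n → ℤ, (∀ i, 1 ≤ p i ∧ p i ≤ (n : ℤ)) →
      (∀ i j, R i j i →
        p i + 1 ≤ p j + (n : ℤ) * ∑ k, (if R i k j ∧ x i = k then (1 : ℤ) else 0)) →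
      (∀ i j, R i j i →
        p i ≤ p j + (n : ℤ) * (1 - (if x i = j then (1 : ℤ) else 0))) →
      (∀ i, p (x i) ≤ p i) ∧ ∀ i j, SPref R i j (x i) → p i < p j) := by
  -- a useful computation of the inner sum
  have hsum : ∀ i j, ∑ k, (if R i k j ∧ x i = k then (1 : ℤ) else 0) =
      if R i (x i) j then 1 else 0 := by
    intro i j
    rw [Finset.sum_eq_single (x i)]
    · simp
    · intro k _ hk
      have : x i ≠ k := Ne.symm hk
      simp [this]
    · simp
  -- the "moreover" part
  have key : ∀ p : Fin n → ℤ, (∀ i, 1 ≤ p i ∧ p i ≤ (n : ℤ)) →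
      (∀ i j, R i j i →
        p i + 1 ≤ p j + (n : ℤ) * ∑ k, (if R i k j ∧ x i = k then (1 : ℤ) else 0)) →
      (∀ i j, R i j i →
        p i ≤ p j + (n : ℤ) * (1 - (if x i = j then (1 : ℤ) else 0))) →
      (∀ i, p (x i) ≤ p i) ∧ ∀ i j, SPref R i j (x i) → p i < p j := by
    intro p hbnd hA hB
    have hle : ∀ i, p i ≤ p (x i) := by
      intro i
      have := hB i (x i) (hIR i)
      simpa using this
    have heq : ∀ i, p (x i) = p i := by
      have := perm_price_eq (fun i => -p i) x hb (fun i => neg_le_neg (hle i))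
      intro i
      have h := this i
      simp only [neg_inj] at h
      exact h
    refine ⟨fun i => le_of_eq (heq i), ?_⟩
    intro i j ⟨hji, hnot⟩
    have hedge : R i j i := htr i j (x i) i hji (hIR i)
    have := hA i j hedge
    rw [hsum i j, if_neg hnot] at this
    linarith
  refine ⟨?_, key⟩
  constructor
  · -- forward: competitive → integer prices
    rintro ⟨-, p, hp1, hp2⟩
    have heq : ∀ i, p (x i) = p i := perm_price_eq p x hb hp1
    set P : Finset ℝ := Finset.univ.image p with hP
    set q : Fin n → ℤ := fun i => ((P.filter (· ≤ p i)).card : ℤ) with hq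
    have hmemfil : ∀ i, p i ∈ P.filter (· ≤ p i) := by
      intro i
      exact Finset.mem_filter.2 ⟨Finset.mem_image_of_mem p (Finset.mem_univ i), le_refl _⟩
    have hq1 : ∀ i, 1 ≤ q i := by
      intro i
      have : 0 < (P.filter (· ≤ p i)).card :=
        Finset.card_pos.2 ⟨p i, hmemfil i⟩
      simp only [hq]
      exact_mod_cast this
    have hqn : ∀ i, q i ≤ (n : ℤ) := by
      intro i
      have h1 : (P.filter (· ≤ p i)).card ≤ P.card :=
        Finset.card_le_card (Finset.filter_subset _ _)
      have h2 : P.card ≤ n := by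
        calc P.card ≤ Finset.univ.card := Finset.card_image_le
          _ = n := by simp
      simp only [hq]
      exact_mod_cast le_trans h1 h2
    have hmono : ∀ i j, p i ≤ p j → q i ≤ q j := by
      intro i j hij
      have : (P.filter (· ≤ p i)) ⊆ (P.filter (· ≤ p j)) := by
        intro v hv
        rcases Finset.mem_filter.1 hv with ⟨h1, h2⟩
        exact Finset.mem_filter.2 ⟨h1, le_trans h2 hij⟩
      simp only [hq]
      exact_mod_cast Finset.card_le_card this
    have hstrict : ∀ i j, p i < p j → q i < q j := by
      intro i j hij
      have hs : (P.filter (· ≤ p i)) ⊂ (P.filter (· ≤ p j)) := by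
        refine ⟨?_, ?_⟩
        · intro v hv
          rcases Finset.mem_filter.1 hv with ⟨h1, h2⟩
          exact Finset.mem_filter.2 ⟨h1, le_trans h2 (le_of_lt hij)⟩
        · intro hsub
          have := hsub (hmemfil j)
          rcases Finset.mem_filter.1 this with ⟨-, h2⟩
          exact absurd h2 (not_le.2 hij)
      simp only [hq]
      exact_mod_cast Finset.card_lt_card hs
    refine ⟨q, fun i => ⟨hq1 i, hqn i⟩, ?_, ?_⟩
    · intro i j hedge
      rw [hsum i j]
      by_cases hc : R i (x i) j
      · rw [if_pos hc]
        have := hqn i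
        have := hq1 j
        linarith
      · rw [if_neg hc]
        have hji : R i j (x i) := (hT i j (x i)).resolve_right hc
        have := hstrict i j (hp2 i j ⟨hji, hc⟩)
        linarith
    · intro i j hedge
      by_cases hc : x i = j
      · rw [if_pos hc]
        have : p i = p j := by rw [← hc]; exact (heq i).symm
        have h1 := hmono i j (le_of_eq this)
        linarith
      · rw [if_neg hc]
        have := hqn i
        have := hq1 j
        linarith
  · -- backward: integer prices → competitive
    rintro ⟨p, hbnd, hA, hB⟩
    obtain ⟨h1, h2⟩ := key p hbnd hA hB
    refine ⟨hb, fun i => ((p i : ℝ)), fun i => ?_, fun i j hij => ?_⟩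
    · show ((p (x i) : ℝ)) ≤ (p i : ℝ)
      exact_mod_cast h1 i
    · show ((p i : ℝ)) < (p j : ℝ)
      exact_mod_cast h2 i j hij
end

section
/- Let x be an individually rational allocation with indicator variables y_{ij}. Then x is in the strong core if and only if there exist integer prices p_i in {1,...,n} satisfying, for every edge (i,j) of the acceptability graph: (a) p_i + 1 <= p_j + n * (sum over k with k R_i j of y_{ik}), (b) p_i <= p_j + n * (1 - y_{ij}), and (c) p_i <= p_j + n * (sum over k with k P_i j of y_{ik}). -/
open scoped Classical

lemma exists_nodup_chain'_s14 {α : Type*} {r : α → α → Prop} {a b : α}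
    (h : Relation.ReflTransGen r a b) :
    ∃ l : List α, l.Nodup ∧ l.Chain' r ∧ l.head? = some a ∧ l.getLast? = some b := by
  induction h using Relation.ReflTransGen.head_induction_on with
  | refl => exact ⟨[b], by simp, List.isChain_singleton _, rfl, rfl⟩
  | head hrel _ ih =>
    rename_i a c _
    obtain ⟨l, hn, hc, hh, hl⟩ := ih
    obtain ⟨l', rfl⟩ : ∃ l', l = c :: l' := by
      cases l with
      | nil => simp at hh
      | cons u t =>
        simp only [List.head?_cons, Option.some.injEq] at hh
        exact ⟨t, by rw [hh]⟩
    by_cases hm : a ∈ c :: l'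
    · obtain ⟨s, t, hst⟩ := List.append_of_mem hm
      refine ⟨a :: t, ?_, ?_, rfl, ?_⟩
      · exact hn.sublist (hst ▸ (List.suffix_append s (a :: t)).sublist)
      · have := hst ▸ hc
        exact (List.isChain_append.mp this).2.1
      · have h1 : (s ++ a :: t).getLast? = some b := hst ▸ hl
        rwa [List.getLast?_append_of_ne_nil _ (by simp)] at h1
    · refine ⟨a :: c :: l', List.nodup_cons.2 ⟨hm, hn⟩, List.isChain_cons_cons.2 ⟨hrel, hc⟩, rfl, ?_⟩
      rw [List.getLast?_cons_cons]
      exact hl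

lemma no_improving_cycle {n : ℕ} {R : Fin n → Fin n → Fin n → Prop} {x : Fin n → Fin n}
    (hSC : ¬ WeaklyBlocks R x) {i j : Fin n} (hs : SPref R i j (x i))
    (hr : Relation.ReflTransGen (fun a b => R a b (x a)) j i) : False := by
  obtain ⟨l, hn, hc, hh, hl⟩ := exists_nodup_chain'_s14 hr
  have hlen : 0 < l.length := by
    cases l with
    | nil => simp at hh
    | cons u t => simp
  have hhead : l[0] = j := by
    cases l with
    | nil => simp at hh
    | cons u t => simpa using hh
  have hlast : l[l.length - 1] = i := by
    have := List.getLast?_eq_getLast (l := l) (by rintro rfl; simp at hh)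
    rw [this] at hl
    rw [List.getLast_eq_getElem] at hl
    exact (Option.some.injEq _ _ ▸ hl.symm) ▸ rfl
  apply hSC
  refine ⟨{v | v ∈ l}, ⟨j, by simp [← hhead]⟩, ⇑l.formPerm, l.formPerm.bijective, ?_, ?_, ?_⟩
  · ext a
    constructor
    · rintro ⟨b, hb, rfl⟩
      exact List.formPerm_apply_mem_of_mem hb
    · intro ha
      refine ⟨l.formPerm.symm a, ?_, by simp⟩
      have : l.formPerm (l.formPerm.symm a) ∈ l := by simpa using ha
      exact List.mem_of_formPerm_apply_mem this
  · -- ∀ k ∈ S, R k (z k) (x k)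
    intro k hk
    obtain ⟨t, ht, rfl⟩ := List.getElem_of_mem hk
    rw [List.formPerm_apply_getElem _ hn t ht]
    by_cases hlt : t + 1 < l.length
    · simp only [Nat.mod_eq_of_lt hlt]
      have := List.isChain_iff_getElem.mp hc t (by omega)
      simpa using this
    · have ht1 : t = l.length - 1 := by omega
      have : (t + 1) % l.length = 0 := by
        have : t + 1 = l.length := by omega
        simp [this]
      simp only [this]
      rw [hhead]
      have h2 : l[t] = i := ht1 ▸ hlast
      rw [h2]
      exact hs.1
  · -- strict witness
    refine ⟨i, by rw [Set.mem_setOf_eq, ← hlast]; exact List.getElem_mem _, ?_⟩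
    have : l.formPerm i = j := by
      conv_lhs => rw [← hlast]
      rw [List.formPerm_apply_getElem _ hn _ (by omega)]
      have : (l.length - 1 + 1) % l.length = 0 := by
        have : l.length - 1 + 1 = l.length := by omega
        simp [this]
      simp only [this]
      exact hhead
    rw [this]
    exact hs

lemma sum_indicator_eq {n : ℕ} (P : Fin n → Prop) (a : Fin n) :
    ∑ k, (if P k ∧ a = k then (1:ℤ) else 0) = if P a then 1 else 0 := by
  rw [Finset.sum_eq_single a]
  · simp
  · intro k _ hk
    simp only [ite_eq_right_iff, and_imp]
    intro _ h
    exact absurd h.symm hk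
  · simp

/-- IP characterisation of the strong core: an individually rational allocation
`x` (with indicators `y i j = [x i = j]`) is in the strong core iff there are
integer prices in `{1, …, n}` satisfying constraints (a), (b), (c) on every
edge of the acceptability graph. -/
theorem strongCore_iff_IP_prices {n : ℕ} (R : Fin n → Fin n → Fin n → Prop)
    (hT : TotalPref R) (htr : TransPref R) (x : Fin n → Fin n)
    (hb : Function.Bijective x) (hIR : ∀ i, R i (x i) i) :
    InStrongCore R x ↔ ∃ p : Fin n → ℤ, (∀ i, 1 ≤ p i ∧ p i ≤ (n : ℤ)) ∧
      (∀ i j, R i j i →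
        p i + 1 ≤ p j + (n : ℤ) * ∑ k, (if R i k j ∧ x i = k then (1 : ℤ) else 0)) ∧
      (∀ i j, R i j i →
        p i ≤ p j + (n : ℤ) * (1 - (if x i = j then (1 : ℤ) else 0))) ∧
      (∀ i j, R i j i →
        p i ≤ p j + (n : ℤ) * ∑ k, (if SPref R i k j ∧ x i = k then (1 : ℤ) else 0)) := by
  constructor
  · -- forward: construct prices
    intro hSC
    set stepR : Fin n → Fin n → Prop := fun a b => R a b (x a) with hstepR
    set reach := Relation.ReflTransGen stepR with hreach
    set p : Fin n → ℤ := fun i => ((Finset.univ.filter (fun k => reach k i)).card : ℤ) with hp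
    have hbd : ∀ i, 1 ≤ p i ∧ p i ≤ (n : ℤ) := by
      intro i
      constructor
      · have hmem : i ∈ Finset.univ.filter (fun k => reach k i) := by
          simp only [Finset.mem_filter, Finset.mem_univ, true_and]
          exact Relation.ReflTransGen.refl
        have h0 := Finset.card_pos.mpr ⟨i, hmem⟩
        simp only [hp]
        exact_mod_cast h0
      · have := Finset.card_filter_le (Finset.univ : Finset (Fin n)) (fun k => reach k i)
        simp only [Finset.card_univ, Fintype.card_fin] at this
        simp only [hp]
        exact_mod_cast this
    have hmono : ∀ i j, stepR i j → p i ≤ p j := by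
      intro i j hij
      have : Finset.univ.filter (fun k => reach k i) ⊆ Finset.univ.filter (fun k => reach k j) := by
        intro k hk
        simp only [Finset.mem_filter, Finset.mem_univ, true_and] at hk ⊢
        exact hk.tail hij
      have h0 := Finset.card_le_card this
      simp only [hp]
      exact_mod_cast h0
    have hstrict : ∀ i j, SPref R i j (x i) → p i + 1 ≤ p j := by
      intro i j hij
      have hsub : Finset.univ.filter (fun k => reach k i) ⊂ Finset.univ.filter (fun k => reach k j) := by
        constructor
        · intro k hk
          simp only [Finset.mem_filter, Finset.mem_univ, true_and] at hk ⊢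
          exact hk.tail hij.1
        · intro hcon
          have hj : j ∈ Finset.univ.filter (fun k => reach k j) := by
            simp only [Finset.mem_filter, Finset.mem_univ, true_and]
            exact Relation.ReflTransGen.refl
          have := hcon hj
          simp only [Finset.mem_filter, Finset.mem_univ, true_and] at this
          exact no_improving_cycle hSC.2 hij this
      have h0 := Finset.card_lt_card hsub
      simp only [hp]
      omega
    refine ⟨p, hbd, ?_, ?_, ?_⟩
    · intro i j hij
      rw [sum_indicator_eq (fun k => R i k j) (x i)]
      by_cases h : R i (x i) j
      · rw [if_pos h]
        have h1 := (hbd i).2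
        have h2 := (hbd j).1
        -- p i + 1 ≤ p j + n
        have hn1 : (1:ℤ) ≤ n := le_trans (hbd i).1 (hbd i).2
        linarith
      · rw [if_neg h]
        have hR : R i j (x i) := (hT i j (x i)).resolve_right h
        have := hstrict i j ⟨hR, h⟩
        linarith
    · intro i j hij
      by_cases h : x i = j
      · rw [if_pos h]
        have : stepR i (x i) := by
          have := hT i (x i) (x i)
          simpa [hstepR] using this.elim id id
        have := hmono i (x i) this
        rw [h] at this
        linarith
      · rw [if_neg h]
        have h1 := (hbd i).2
        have h2 := (hbd j).1
        linarith
    · intro i j hij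
      rw [sum_indicator_eq (fun k => SPref R i k j) (x i)]
      by_cases h : SPref R i (x i) j
      · rw [if_pos h]
        have h1 := (hbd i).2
        have h2 := (hbd j).1
        linarith
      · rw [if_neg h]
        have hR : R i j (x i) := by
          rcases hT i j (x i) with h1 | h1
          · exact h1
          · by_contra h2
            exact h ⟨h1, h2⟩
        have := hmono i j hR
        linarith
  · -- backward
    rintro ⟨p, hbd, ha, hb', hc'⟩
    refine ⟨hb, ?_⟩
    rintro ⟨S, hSne, z, hzb, hzS, hall, j₀, hj₀S, hj₀⟩
    have hle : ∀ i ∈ S, p i ≤ p (z i) := by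
      intro i hi
      have h1 : R i (z i) (x i) := hall i hi
      have hedge : R i (z i) i := htr i (z i) (x i) i h1 (hIR i)
      have hc2 := hc' i (z i) hedge
      rw [sum_indicator_eq (fun k => SPref R i k (z i)) (x i)] at hc2
      have hns : ¬ SPref R i (x i) (z i) := fun hS => hS.2 h1
      rw [if_neg hns] at hc2
      simpa using hc2
    have hlt : p j₀ < p (z j₀) := by
      have h1 : R j₀ (z j₀) (x j₀) := hj₀.1
      have hedge : R j₀ (z j₀) j₀ := htr j₀ (z j₀) (x j₀) j₀ h1 (hIR j₀)
      have ha2 := ha j₀ (z j₀) hedge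
      rw [sum_indicator_eq (fun k => R j₀ k (z j₀)) (x j₀)] at ha2
      rw [if_neg hj₀.2] at ha2
      simpa using ha2
    -- sum contradiction
    set T : Finset (Fin n) := (Set.toFinite S).toFinset with hTdef
    have hmemT : ∀ a, a ∈ T ↔ a ∈ S := fun a => Set.Finite.mem_toFinset _
    have hsum_lt : ∑ i ∈ T, p i < ∑ i ∈ T, p (z i) := by
      apply Finset.sum_lt_sum
      · intro i hi
        exact hle i ((hmemT i).mp hi)
      · exact ⟨j₀, (hmemT j₀).mpr hj₀S, hlt⟩
    have himg : T.image z = T := by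
      ext a
      simp only [Finset.mem_image, hmemT]
      constructor
      · rintro ⟨b, hb2, rfl⟩
        have : z b ∈ z '' S := ⟨b, hb2, rfl⟩
        rwa [hzS] at this
      · intro haS
        have : a ∈ z '' S := by rw [hzS]; exact haS
        obtain ⟨b, hb2, rfl⟩ := this
        exact ⟨b, hb2, rfl⟩
    have hsum_eq : ∑ i ∈ T, p (z i) = ∑ i ∈ T, p i := by
      rw [← Finset.sum_image (fun a _ b _ h => hzb.1 h), himg]
    rw [hsum_eq] at hsum_lt
    exact absurd hsum_lt (lt_irrefl _)
end

section
/- For strict preferences, the price constraints characterizing the strong core are implied by those characterizing competitive allocations: if preferences are strict and (x,p) satisfies p_i + 1 <= p_j + n*(sum over k R_i j of y_{ik}) and p_i <= p_j + n*(1 - y_{ij}) for all edges (i,j), then also p_i <= p_j + n*(sum over k with k P_i j of y_{ik}) for all edges (i,j). -/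
open scoped Classical

/-- For strict preferences, the competitive-allocation price constraints imply
the strong core price constraint on every edge of the acceptability graph. -/
theorem strict_competitive_constraints_imply_strongCore_constraints {n : ℕ}
    (R : Fin n → Fin n → Fin n → Prop)
    (hT : TotalPref R) (htr : TransPref R) (hs : StrictPrefs R)
    (x : Fin n → Fin n) (hb : Function.Bijective x) (p : Fin n → ℤ)
    (hp : ∀ i, 1 ≤ p i ∧ p i ≤ (n : ℤ))
    (ha : ∀ i j, R i j i →
      p i + 1 ≤ p j + (n : ℤ) * ∑ k, (if R i k j ∧ x i = k then (1 : ℤ) else 0))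
    (hbc : ∀ i j, R i j i →
      p i ≤ p j + (n : ℤ) * (1 - (if x i = j then (1 : ℤ) else 0))) :
    ∀ i j, R i j i →
      p i ≤ p j + (n : ℤ) * ∑ k, (if SPref R i k j ∧ x i = k then (1 : ℤ) else 0) := by
  intro i j hij
  have hsum : ∀ (P : Fin n → Prop),
      (∑ k, (if P k ∧ x i = k then (1 : ℤ) else 0)) = if P (x i) then 1 else 0 := by
    intro P
    rw [Finset.sum_eq_single (x i)]
    · simp
    · intro b _ hb; simp [Ne.symm hb]
    · simp
  rw [hsum]
  have ha' := ha i j hij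
  rw [hsum] at ha'
  by_cases hsp : SPref R i (x i) j
  · simp only [hsp, if_pos]
    have h1 := (hp i).2
    have h2 := (hp j).1
    linarith
  · simp only [hsp, if_neg, not_false_iff, mul_zero, add_zero]
    by_cases hxj : x i = j
    · have := hbc i j hij
      simp [hxj] at this ⊢
      linarith
    · have hnR : ¬ R i (x i) j := by
        intro hR
        have hacc : R i (x i) i := htr i (x i) j i hR hij
        have := hs i (x i) j hxj hacc hij
        have hji : R i j (x i) := by
          by_contra hc
          exact hsp ⟨hR, hc⟩
        exact this ⟨hR, hji⟩
      simp only [hnR, if_neg, not_false_iff, mul_zero, add_zero] at ha'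
      linarith
end

section
/- An allocation x is in the Wako-core (the core defined by antisymmetric weak domination, equivalently the set of competitive allocations) if and only if for every cycle c in the acceptability graph, at least one of the following holds: (i) c is an exchange cycle of x (every edge of c is used by x); (ii) some agent i on c strictly prefers x_i to her successor object c_i in the cycle; or (iii) some agent i on c is indifferent between c_i and x_i with c_i ≠ x_i. -/
/-- Cycle characterisation of the Wako-core: `x` is in the Wako-core iff every
cycle `f` of the acceptability graph (distinct agents, each pointing to an
acceptable object) satisfies (i) it is an exchange cycle of `x`, or (ii) some
agent on it strictly prefers her allotment to her successor's object, or
(iii) some agent on it is indifferent between her successor's object and her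
allotment while they differ. -/
theorem wakoCore_iff_cycle_condition {n : ℕ} (R : Fin n → Fin n → Fin n → Prop)
    (hT : TotalPref R) (htr : TransPref R) (x : Fin n → Fin n)
    (hb : Function.Bijective x) :
    InWakoCore R x ↔
      ∀ (k : ℕ) (f : Fin (k + 1) → Fin n), Function.Injective f →
        (∀ l, R (f l) (f (l + 1)) (f l)) →
        ((∀ l, x (f l) = f (l + 1)) ∨
         (∃ l, SPref R (f l) (x (f l)) (f (l + 1))) ∨
         (∃ l, Indiff R (f l) (f (l + 1)) (x (f l)) ∧ f (l + 1) ≠ x (f l))) := by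
  classical
  constructor
  · rintro ⟨-, hnb⟩ k f hf hedge
    by_contra hc
    push_neg at hc
    obtain ⟨h1, h2, h3⟩ := hc
    obtain ⟨l0, hl0⟩ := h1
    have hRcx : ∀ l, R (f l) (f (l + 1)) (x (f l)) := by
      intro l
      rcases hT (f l) (f (l + 1)) (x (f l)) with h | h
      · exact h
      · by_contra hcx
        exact h2 l ⟨h, hcx⟩
    apply hnb
    set emb : Fin (k + 1) ↪ Fin n := ⟨f, hf⟩ with hembdef
    set z : Equiv.Perm (Fin n) := (Equiv.addRight (1 : Fin (k + 1))).viaEmbedding emb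
      with hzdef
    have hzf : ∀ l, z (f l) = f (l + 1) := by
      intro l
      have := Equiv.Perm.viaEmbedding_apply (Equiv.addRight (1 : Fin (k + 1))) emb l
      simpa [hembdef] using this
    refine ⟨Set.range f, ⟨f 0, 0, rfl⟩, ⇑z, z.bijective, ?_, ?_, ?_, ?_⟩
    · ext i
      constructor
      · rintro ⟨a, ⟨l, rfl⟩, rfl⟩
        exact ⟨l + 1, (hzf l).symm⟩
      · rintro ⟨m, rfl⟩
        refine ⟨f (m - 1), ⟨m - 1, rfl⟩, ?_⟩
        rw [hzf]; congr 1; simp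
    · rintro i ⟨l, rfl⟩
      rw [hzf]; exact hRcx l
    · refine ⟨f l0, ⟨l0, rfl⟩, ?_⟩
      rw [hzf]
      refine ⟨hRcx l0, fun hxc => ?_⟩
      exact hl0 (h3 l0 ⟨hRcx l0, hxc⟩).symm
    · rintro i ⟨l, rfl⟩ hind
      rw [hzf] at hind ⊢
      exact h3 l hind
  · intro h
    refine ⟨hb, ?_⟩
    rintro ⟨S, -, z, hzb, hzS, hR, ⟨j, hjS, hj⟩, hanti⟩
    have hrefl : ∀ i a, R i a a := fun i a => (hT i a a).elim id id
    have hIR : ∀ i, R i (x i) i := by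
      intro i
      have hcon := h 0 (fun _ => i) (fun a b _ => @Subsingleton.elim _ Fin.subsingleton_one a b)
        (fun _ => hrefl i i)
      rcases hcon with h1 | ⟨l, h2⟩ | ⟨l, h3, -⟩
      · have := h1 0
        have this : x i = i := this
        rw [this]; exact hrefl i i
      · exact h2.1
      · exact h3.2
    set σ : Equiv.Perm (Fin n) := Equiv.ofBijective z hzb with hσdef
    have hσz : ∀ i, σ i = z i := fun i => rfl
    have hper : Function.IsPeriodicPt (⇑σ) (orderOf σ) j := by
      show (⇑σ)^[orderOf σ] j = j
      rw [Equiv.Perm.iterate_eq_pow, pow_orderOf_eq_one]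
      rfl
    have hm : 0 < Function.minimalPeriod (⇑σ) j :=
      hper.minimalPeriod_pos (orderOf_pos σ)
    obtain ⟨k, hk⟩ : ∃ k, Function.minimalPeriod (⇑σ) j = k + 1 :=
      ⟨_, (Nat.succ_pred_eq_of_pos hm).symm⟩
    set f : Fin (k + 1) → Fin n := fun l => (⇑σ)^[(l : ℕ)] j with hfdef
    have hmem : ∀ t : ℕ, (⇑σ)^[t] j ∈ S := by
      intro t
      induction t with
      | zero => exact hjS
      | succ t ih =>
        rw [Function.iterate_succ_apply']
        have : σ ((⇑σ)^[t] j) ∈ z '' S := ⟨_, ih, (hσz _).symm⟩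
        rwa [hzS] at this
    have hinj : Function.Injective f := by
      intro a b hab
      have ha : (a : ℕ) ∈ Set.Iio (Function.minimalPeriod (⇑σ) j) := by
        simp [hk, a.isLt]
      have hb' : (b : ℕ) ∈ Set.Iio (Function.minimalPeriod (⇑σ) j) := by
        simp [hk, b.isLt]
      exact Fin.ext (Function.iterate_injOn_Iio_minimalPeriod ha hb' hab)
    have hstep : ∀ l, f (l + 1) = z (f l) := by
      intro l
      by_cases hl : l = Fin.last k
      · have h1 : ((l + 1 : Fin (k + 1)) : ℕ) = 0 := by
          rw [hl]; simp
        have h2 : (l : ℕ) = k := by rw [hl]; rfl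
        simp only [hfdef, h1, h2, Function.iterate_zero_apply]
        have : (⇑σ)^[k + 1] j = j := by
          have := Function.iterate_minimalPeriod (f := ⇑σ) (x := j)
          rwa [hk] at this
        rw [← hσz]
        exact this.symm.trans (Function.iterate_succ_apply' _ _ _)
      · have h1 : ((l + 1 : Fin (k + 1)) : ℕ) = (l : ℕ) + 1 := by
          rw [Fin.val_add_one]
          simp [hl]
        simp only [hfdef, h1, Function.iterate_succ_apply']
        exact (hσz _).symm
    have hedge : ∀ l, R (f l) (f (l + 1)) (f l) := by
      intro l
      rw [hstep]
      exact htr _ _ _ _ (hR _ (hmem l)) (hIR _)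
    have hf0 : f 0 = j := by simp [hfdef]
    rcases h k f hinj hedge with h1 | ⟨l, h2⟩ | ⟨l, h3, hne⟩
    · have := h1 0
      rw [hstep 0, hf0] at this
      exact hj.2 (this ▸ hrefl j (x j))
    · rw [hstep] at h2
      exact h2.2 (hR _ (hmem l))
    · rw [hstep] at h3 hne
      exact hne (hanti _ (hmem l) h3)
end

section
/- An allocation x is in the strong core if and only if for every cycle c in the acceptability graph, at least one of the following holds: (i) c is an exchange cycle of x; (ii) some agent i on c strictly prefers x_i to c_i; or (iii) every agent i on c is indifferent between c_i and x_i. -/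
/-- Cycle characterisation of the strong core: `x` is in the strong core iff
every cycle `f` of the acceptability graph satisfies (i) it is an exchange
cycle of `x`, or (ii) some agent on it strictly prefers her allotment to her
successor's object, or (iii) every agent on it is indifferent between her
successor's object and her allotment. -/
theorem strongCore_iff_cycle_condition {n : ℕ} (R : Fin n → Fin n → Fin n → Prop)
    (hT : TotalPref R) (htr : TransPref R) (x : Fin n → Fin n)
    (hb : Function.Bijective x) :
    InStrongCore R x ↔
      ∀ (k : ℕ) (f : Fin (k + 1) → Fin n), Function.Injective f →
        (∀ l, R (f l) (f (l + 1)) (f l)) →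
        ((∀ l, x (f l) = f (l + 1)) ∨
         (∃ l, SPref R (f l) (x (f l)) (f (l + 1))) ∨
         (∀ l, Indiff R (f l) (f (l + 1)) (x (f l)))) := by
  classical
  constructor
  · rintro ⟨-, hnb⟩ k f hf hedge
    by_contra hcon
    push_neg at hcon
    obtain ⟨h1, h2, h3⟩ := hcon
    apply hnb
    set z : Fin n → Fin n := fun i =>
      if h : ∃ l, f l = i then f (Classical.choose h + 1) else i with hzdef
    have hz_apply : ∀ l, z (f l) = f (l + 1) := by
      intro l
      have h : ∃ l', f l' = f l := ⟨l, rfl⟩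
      have hc : Classical.choose h = l := hf (Classical.choose_spec h)
      simp only [hzdef, dif_pos h, hc]
    have hz_inj : Function.Injective z := by
      intro a b hab
      by_cases ha : ∃ l, f l = a <;> by_cases hb' : ∃ l, f l = b
      · obtain ⟨la, rfl⟩ := ha; obtain ⟨lb, rfl⟩ := hb'
        rw [hz_apply, hz_apply] at hab
        have h1 : la + 1 = lb + 1 := hf hab
        have : la = lb := by
          have := congrArg (· + (-1)) h1
          simpa using this
        rw [this]
      · obtain ⟨la, rfl⟩ := ha
        rw [hz_apply] at hab
        have hzb : z b = b := by simp only [hzdef, dif_neg hb']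
        rw [hzb] at hab
        exact absurd ⟨la + 1, hab⟩ hb'
      · obtain ⟨lb, rfl⟩ := hb'
        rw [hz_apply] at hab
        have hza : z a = a := by simp only [hzdef, dif_neg ha]
        rw [hza] at hab
        exact absurd ⟨lb + 1, hab.symm⟩ ha
      · have hza : z a = a := by simp only [hzdef, dif_neg ha]
        have hzb : z b = b := by simp only [hzdef, dif_neg hb']
        rw [hza, hzb] at hab; exact hab
    have hz_bij : Function.Bijective z := Finite.injective_iff_bijective.mp hz_inj
    have hweak : ∀ l, R (f l) (f (l + 1)) (x (f l)) := by
      intro l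
      rcases hT (f l) (f (l + 1)) (x (f l)) with h | h
      · exact h
      · by_contra hc
        exact h2 l ⟨h, hc⟩
    refine ⟨Set.range f, ⟨f 0, Set.mem_range_self 0⟩, z, hz_bij, ?_, ?_, ?_⟩
    · apply Set.Subset.antisymm
      · rintro _ ⟨i, ⟨l, rfl⟩, rfl⟩
        rw [hz_apply]; exact Set.mem_range_self _
      · rintro _ ⟨m, rfl⟩
        exact ⟨f (m - 1), Set.mem_range_self _, by rw [hz_apply, sub_add_cancel]⟩
    · rintro i ⟨l, rfl⟩
      rw [hz_apply]; exact hweak l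
    · obtain ⟨l, hl⟩ := h3
      refine ⟨f l, Set.mem_range_self l, ?_⟩
      rw [hz_apply]
      refine ⟨hweak l, fun hc => hl ⟨hweak l, hc⟩⟩
  · intro hcyc
    refine ⟨hb, ?_⟩
    rintro ⟨S, ⟨j0, hj0⟩, z, hzb, hzS, hwk, j, hjS, hjstrict⟩
    have hrefl : ∀ i a, R i a a := by
      intro i a; rcases hT i a a with h | h <;> exact h
    have hIR : ∀ i, R i (x i) i := by
      intro i
      have := hcyc 0 (fun _ => i) (fun a b _ => Fin.ext (by omega))
        (fun _ => hrefl i i)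
      rcases this with h | ⟨l, hl⟩ | h
      · rw [h 0]; exact hrefl i i
      · exact hl.1
      · exact (h 0).2
    have hacc : ∀ i ∈ S, R i (z i) i := fun i hi => htr i _ _ _ (hwk i hi) (hIR i)
    have hSmem : ∀ i ∈ S, z i ∈ S := by
      intro i hi; rw [← hzS]; exact ⟨i, hi, rfl⟩
    have horb : ∀ m : ℕ, z^[m] j ∈ S := by
      intro m
      induction m with
      | zero => exact hjS
      | succ m ih => rw [Function.iterate_succ_apply']; exact hSmem _ ih
    -- j is a periodic point of z
    have hper : j ∈ Function.periodicPts z := by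
      set σ : Equiv.Perm (Fin n) := Equiv.ofBijective z hzb with hσ
      refine ⟨orderOf σ, orderOf_pos σ, ?_⟩
      have : z^[orderOf σ] = ⇑(σ ^ orderOf σ) := by
        rw [← Equiv.Perm.iterate_eq_pow]
        rfl
      show z^[orderOf σ] j = j
      rw [this, pow_orderOf_eq_one σ]
      rfl
    set m := Function.minimalPeriod z j with hm
    have hmpos : 0 < m := Function.minimalPeriod_pos_of_mem_periodicPts hper
    set k := m - 1 with hk
    have hkm : k + 1 = m := Nat.succ_pred_eq_of_pos hmpos
    set g : Fin (k + 1) → Fin n := fun l => z^[l.val] j with hg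
    have hg_inj : Function.Injective g := by
      intro a b hab
      have := Function.iterate_injOn_Iio_minimalPeriod (f := z) (x := j)
        (by rw [Set.mem_Iio, ← hm, ← hkm]; exact a.isLt)
        (by rw [Set.mem_Iio, ← hm, ← hkm]; exact b.isLt) hab
      exact Fin.ext this
    have hg_step : ∀ l : Fin (k + 1), g (l + 1) = z (g l) := by
      intro l
      have hval : (l + 1 : Fin (k + 1)).val = (l.val + 1) % (k + 1) := by
        simp [Fin.add_def]
      rcases Nat.lt_or_ge (l.val + 1) (k + 1) with hlt | hge
      · rw [hg]
        simp only [hval, Nat.mod_eq_of_lt hlt, Function.iterate_succ_apply']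
      · have hl : l.val = k := by omega
        have hv0 : (l + 1 : Fin (k + 1)).val = 0 := by
          rw [hval, hl]; simp
        have hgz : g (l + 1) = j := by
          rw [hg]; simp only [hv0]; rfl
        rw [hgz, hg]
        simp only [hl, ← Function.iterate_succ_apply']
        rw [Nat.succ_eq_add_one, hkm]
        exact (Function.iterate_minimalPeriod (f := z) (x := j)).symm
    have hgS : ∀ l, g l ∈ S := fun l => horb l.val
    have hg0 : g 0 = j := rfl
    have hedge : ∀ l, R (g l) (g (l + 1)) (g l) := by
      intro l; rw [hg_step]; exact hacc _ (hgS l)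
    rcases hcyc k g hg_inj hedge with h | ⟨l, hl⟩ | h
    · have hxz : x j = z j := by
        have := h 0
        rw [hg0] at this
        rw [this, ← hg0, hg_step, hg0]
      rw [← hxz] at hjstrict
      exact hjstrict.2 (hrefl j (x j))
    · rw [hg_step] at hl
      exact hl.2 (hwk _ (hgS l))
    · have := h 0
      rw [hg_step, hg0] at this
      exact hjstrict.2 this.2
end

section
/- For 3-housing markets (cycle length at most 3), the core/Wako-core/strong core does not respect improvement in best allotments: there exist 3-housing markets (N,R) and (N,R~) with strict preferences where the strong 3-core, Wako-3-core and 3-core all coincide and are nonempty in both markets, R~ is an improvement for some agent i with respect to R, yet agent i's most preferred allotment among core allocations of R is strictly preferred by i to her most preferred allotment among core allocations of R~. -/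
/-- A 3-allocation: every exchange cycle has length at most 3. -/
def Is3Alloc (x : Fin 10 → Fin 10) : Prop :=
  Function.Bijective x ∧ ∀ i, x (x i) = i ∨ x (x (x i)) = i

/-- Some coalition of size at most 3 blocks `x`. -/
def Blocks3 (R : Fin 10 → Fin 10 → Fin 10 → Prop) (x : Fin 10 → Fin 10) : Prop :=
  ∃ S : Finset (Fin 10), 0 < S.card ∧ S.card ≤ 3 ∧ ∃ z : Fin 10 → Fin 10,
    Function.Bijective z ∧ S.image z = S ∧ ∀ i ∈ S, SPref R i (z i) (x i)

/-- Some coalition of size at most 3 weakly blocks `x`. -/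
def WeaklyBlocks3 (R : Fin 10 → Fin 10 → Fin 10 → Prop) (x : Fin 10 → Fin 10) : Prop :=
  ∃ S : Finset (Fin 10), 0 < S.card ∧ S.card ≤ 3 ∧ ∃ z : Fin 10 → Fin 10,
    Function.Bijective z ∧ S.image z = S ∧ (∀ i ∈ S, R i (z i) (x i)) ∧
    ∃ j ∈ S, SPref R j (z j) (x j)

/-- Some coalition of size at most 3 antisymmetrically weakly blocks `x`. -/
def AWBlocks3 (R : Fin 10 → Fin 10 → Fin 10 → Prop) (x : Fin 10 → Fin 10) : Prop :=
  ∃ S : Finset (Fin 10), 0 < S.card ∧ S.card ≤ 3 ∧ ∃ z : Fin 10 → Fin 10,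
    Function.Bijective z ∧ S.image z = S ∧ (∀ i ∈ S, R i (z i) (x i)) ∧
    (∃ j ∈ S, SPref R j (z j) (x j)) ∧
    ∀ i ∈ S, Indiff R i (z i) (x i) → z i = x i

def InCore3 (R : Fin 10 → Fin 10 → Fin 10 → Prop) (x : Fin 10 → Fin 10) : Prop :=
  Is3Alloc x ∧ ¬ Blocks3 R x

def InStrongCore3 (R : Fin 10 → Fin 10 → Fin 10 → Prop) (x : Fin 10 → Fin 10) : Prop :=
  Is3Alloc x ∧ ¬ WeaklyBlocks3 R x

def InWakoCore3 (R : Fin 10 → Fin 10 → Fin 10 → Prop) (x : Fin 10 → Fin 10) : Prop :=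
  Is3Alloc x ∧ ¬ AWBlocks3 R x


/-! ### Auxiliary definitions and lemmas -/

section Aux

instance instDecSPref {n : ℕ} (R : Fin n → Fin n → Fin n → Prop)
    [∀ i a b, Decidable (R i a b)] (i a b : Fin n) : Decidable (SPref R i a b) :=
  inferInstanceAs (Decidable (_ ∧ _))

instance instDecIndiff {n : ℕ} (R : Fin n → Fin n → Fin n → Prop)
    [∀ i a b, Decidable (R i a b)] (i a b : Fin n) : Decidable (Indiff R i a b) :=
  inferInstanceAs (Decidable (_ ∧ _))

def uRt : List (List Nat) :=
[[97, 99, 1, 100, 2, 3, 4, 5, 6, 98],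
 [99, 98, 100, 1, 2, 3, 4, 5, 6, 7],
 [1, 99, 98, 100, 2, 3, 4, 5, 6, 7],
 [1, 2, 98, 97, 100, 3, 4, 99, 5, 6],
 [1, 2, 3, 99, 98, 100, 4, 5, 6, 7],
 [1, 2, 3, 4, 99, 98, 100, 5, 6, 7],
 [1, 2, 3, 4, 5, 99, 98, 100, 6, 7],
 [1, 2, 3, 4, 5, 6, 99, 98, 100, 7],
 [1, 2, 3, 4, 5, 6, 7, 99, 98, 100],
 [100, 1, 2, 3, 4, 5, 6, 7, 99, 98]]

def uRpt : List (List Nat) :=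
[[97, 99, 1, 100, 2, 3, 4, 5, 6, 98],
 [99, 98, 100, 1, 2, 3, 4, 5, 6, 7],
 [1, 99, 98, 100, 2, 3, 4, 5, 6, 7],
 [1, 2, 98, 97, 100, 3, 4, 99, 5, 6],
 [1, 2, 3, 99, 98, 100, 4, 5, 6, 7],
 [1, 2, 3, 4, 99, 98, 100, 5, 6, 7],
 [1, 2, 3, 4, 5, 99, 98, 100, 6, 7],
 [99, 1, 2, 3, 4, 5, 98, 97, 100, 6],
 [1, 2, 3, 4, 5, 6, 7, 99, 98, 100],
 [100, 1, 2, 3, 4, 5, 6, 7, 99, 98]]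

def uR : Fin 10 → Fin 10 → ℕ := fun i a => ((uRt.getD i.val []).getD a.val 0)
def uRp : Fin 10 → Fin 10 → ℕ := fun i a => ((uRpt.getD i.val []).getD a.val 0)

def Rr : Fin 10 → Fin 10 → Fin 10 → Prop := fun i a b => uR i b ≤ uR i a
def Rp : Fin 10 → Fin 10 → Fin 10 → Prop := fun i a b => uRp i b ≤ uRp i a

instance : ∀ i a b, Decidable (Rr i a b) := fun i a b => Nat.decLe _ _
instance : ∀ i a b, Decidable (Rp i a b) := fun i a b => Nat.decLe _ _

def xA : Fin 10 → Fin 10 := ![1,0,3,2,5,4,7,6,9,8]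
def xB : Fin 10 → Fin 10 := ![9,2,1,4,3,6,5,8,7,0]

/-- Strict blocking in "cycle form": a blocking coalition that is a single
exchange cycle of length 1, 2 or 3. -/
abbrev CycS (R : Fin 10 → Fin 10 → Fin 10 → Prop) (x : Fin 10 → Fin 10) : Prop :=
  (∃ i, SPref R i i (x i)) ∨
  (∃ i j : Fin 10, i ≠ j ∧ SPref R i j (x i) ∧ SPref R j i (x j)) ∨
  (∃ i j k : Fin 10, i ≠ j ∧ j ≠ k ∧ i ≠ k ∧
    SPref R i j (x i) ∧ SPref R j k (x j) ∧ SPref R k i (x k))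

/-- Weak blocking in cycle form, with the strict improver first. -/
abbrev CycW (R : Fin 10 → Fin 10 → Fin 10 → Prop) (x : Fin 10 → Fin 10) : Prop :=
  (∃ i, SPref R i i (x i)) ∨
  (∃ i j : Fin 10, i ≠ j ∧ SPref R i j (x i) ∧ R j i (x j)) ∨
  (∃ i j k : Fin 10, i ≠ j ∧ j ≠ k ∧ i ≠ k ∧
    SPref R i j (x i) ∧ R j k (x j) ∧ R k i (x k))

abbrev Ac (R : Fin 10 → Fin 10 → Fin 10 → Prop) (i : Fin 10) := {a : Fin 10 // R i a i}

/-- Leaf condition for the exhaustive search over individually rational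
allocations for `Rr`. -/
abbrev LeafR (x : Fin 10 → Fin 10) : Prop :=
  x = xA ∨ x = xB ∨ (¬ ∀ i, x (x i) = i ∨ x (x (x i)) = i) ∨ CycS Rr x

/-- Leaf condition for `Rp`. -/
abbrev LeafP (x : Fin 10 → Fin 10) : Prop :=
  x = xB ∨ (¬ ∀ i, x (x i) = i ∨ x (x (x i)) = i) ∨ CycS Rp x

set_option maxRecDepth 100000 in
set_option synthInstance.maxSize 1000000 in
set_option synthInstance.maxHeartbeats 4000000 in
set_option maxHeartbeats 4000000 in
lemma D_Rr : ∀ a0 : Ac Rr 0, ∀ a1 : Ac Rr 1, a1.1 = a0.1 ∨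
    (∀ a2 : Ac Rr 2, (a2.1 = a0.1 ∨ a2.1 = a1.1) ∨
    (∀ a3 : Ac Rr 3, (a3.1 = a0.1 ∨ a3.1 = a1.1 ∨ a3.1 = a2.1) ∨
    (∀ a4 : Ac Rr 4, (a4.1 = a0.1 ∨ a4.1 = a1.1 ∨ a4.1 = a2.1 ∨ a4.1 = a3.1) ∨
    (∀ a5 : Ac Rr 5, (a5.1 = a0.1 ∨ a5.1 = a1.1 ∨ a5.1 = a2.1 ∨ a5.1 = a3.1 ∨ a5.1 = a4.1) ∨
    (∀ a6 : Ac Rr 6, (a6.1 = a0.1 ∨ a6.1 = a1.1 ∨ a6.1 = a2.1 ∨ a6.1 = a3.1 ∨ a6.1 = a4.1 ∨ a6.1 = a5.1) ∨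
    (∀ a7 : Ac Rr 7, (a7.1 = a0.1 ∨ a7.1 = a1.1 ∨ a7.1 = a2.1 ∨ a7.1 = a3.1 ∨ a7.1 = a4.1 ∨ a7.1 = a5.1 ∨ a7.1 = a6.1) ∨
    (∀ a8 : Ac Rr 8, (a8.1 = a0.1 ∨ a8.1 = a1.1 ∨ a8.1 = a2.1 ∨ a8.1 = a3.1 ∨ a8.1 = a4.1 ∨ a8.1 = a5.1 ∨ a8.1 = a6.1 ∨ a8.1 = a7.1) ∨
    (∀ a9 : Ac Rr 9, (a9.1 = a0.1 ∨ a9.1 = a1.1 ∨ a9.1 = a2.1 ∨ a9.1 = a3.1 ∨ a9.1 = a4.1 ∨ a9.1 = a5.1 ∨ a9.1 = a6.1 ∨ a9.1 = a7.1 ∨ a9.1 = a8.1) ∨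
    LeafR ![a0.1,a1.1,a2.1,a3.1,a4.1,a5.1,a6.1,a7.1,a8.1,a9.1])))))))) := by decide

set_option maxRecDepth 100000 in
set_option synthInstance.maxSize 1000000 in
set_option synthInstance.maxHeartbeats 4000000 in
set_option maxHeartbeats 4000000 in
lemma D_Rp : ∀ a0 : Ac Rp 0, ∀ a1 : Ac Rp 1, a1.1 = a0.1 ∨
    (∀ a2 : Ac Rp 2, (a2.1 = a0.1 ∨ a2.1 = a1.1) ∨
    (∀ a3 : Ac Rp 3, (a3.1 = a0.1 ∨ a3.1 = a1.1 ∨ a3.1 = a2.1) ∨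
    (∀ a4 : Ac Rp 4, (a4.1 = a0.1 ∨ a4.1 = a1.1 ∨ a4.1 = a2.1 ∨ a4.1 = a3.1) ∨
    (∀ a5 : Ac Rp 5, (a5.1 = a0.1 ∨ a5.1 = a1.1 ∨ a5.1 = a2.1 ∨ a5.1 = a3.1 ∨ a5.1 = a4.1) ∨
    (∀ a6 : Ac Rp 6, (a6.1 = a0.1 ∨ a6.1 = a1.1 ∨ a6.1 = a2.1 ∨ a6.1 = a3.1 ∨ a6.1 = a4.1 ∨ a6.1 = a5.1) ∨
    (∀ a7 : Ac Rp 7, (a7.1 = a0.1 ∨ a7.1 = a1.1 ∨ a7.1 = a2.1 ∨ a7.1 = a3.1 ∨ a7.1 = a4.1 ∨ a7.1 = a5.1 ∨ a7.1 = a6.1) ∨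
    (∀ a8 : Ac Rp 8, (a8.1 = a0.1 ∨ a8.1 = a1.1 ∨ a8.1 = a2.1 ∨ a8.1 = a3.1 ∨ a8.1 = a4.1 ∨ a8.1 = a5.1 ∨ a8.1 = a6.1 ∨ a8.1 = a7.1) ∨
    (∀ a9 : Ac Rp 9, (a9.1 = a0.1 ∨ a9.1 = a1.1 ∨ a9.1 = a2.1 ∨ a9.1 = a3.1 ∨ a9.1 = a4.1 ∨ a9.1 = a5.1 ∨ a9.1 = a6.1 ∨ a9.1 = a7.1 ∨ a9.1 = a8.1) ∨
    LeafP ![a0.1,a1.1,a2.1,a3.1,a4.1,a5.1,a6.1,a7.1,a8.1,a9.1])))))))) := by decide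

/-- A cycle-form strict block gives a genuine size-≤3 block. -/
lemma blocks3_of_cycS {R : Fin 10 → Fin 10 → Fin 10 → Prop} {x : Fin 10 → Fin 10}
    (h : CycS R x) : Blocks3 R x := by
  rcases h with ⟨i, hi⟩ | ⟨i, j, hij, h1, h2⟩ | ⟨i, j, k, hij, hjk, hik, h1, h2, h3⟩
  · refine ⟨{i}, by simp, by simp, id, Function.bijective_id, Finset.image_id, ?_⟩
    intro m hm; rw [Finset.mem_singleton] at hm; subst hm; exact hi
  · refine ⟨{i, j}, ?_, ?_, ⇑(Equiv.swap i j), (Equiv.swap i j).bijective, ?_, ?_⟩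
    · simp [Finset.card_pair hij]
    · rw [Finset.card_pair hij]; norm_num
    · rw [Finset.image_insert, Finset.image_singleton, Equiv.swap_apply_left,
        Equiv.swap_apply_right, Finset.pair_comm]
    · intro m hm
      rcases Finset.mem_insert.1 hm with hm | hm
      · subst hm; rwa [Equiv.swap_apply_left]
      · rw [Finset.mem_singleton] at hm; subst hm; rwa [Equiv.swap_apply_right]
  · have hzi : (⇑(Equiv.swap i k) ∘ ⇑(Equiv.swap i j)) i = j := by
      simp [Equiv.swap_apply_of_ne_of_ne (Ne.symm hij) hjk]
    have hzj : (⇑(Equiv.swap i k) ∘ ⇑(Equiv.swap i j)) j = k := by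
      simp
    have hzk : (⇑(Equiv.swap i k) ∘ ⇑(Equiv.swap i j)) k = i := by
      simp [Equiv.swap_apply_of_ne_of_ne (Ne.symm hik) (Ne.symm hjk)]
    refine ⟨{i, j, k}, ?_, ?_, ⇑(Equiv.swap i k) ∘ ⇑(Equiv.swap i j),
      ((Equiv.swap i j).trans (Equiv.swap i k)).bijective, ?_, ?_⟩
    · exact Finset.card_pos.2 ⟨i, by simp⟩
    · calc ({i, j, k} : Finset (Fin 10)).card ≤ ({j, k} : Finset (Fin 10)).card + 1 :=
            Finset.card_insert_le _ _
        _ ≤ 3 := by have := Finset.card_insert_le j ({k} : Finset (Fin 10)); simp at this ⊢; omega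
    · rw [Finset.image_insert, Finset.image_insert, Finset.image_singleton,
        hzi, hzj, hzk]
      ext m; simp only [Finset.mem_insert, Finset.mem_singleton]; tauto
    · intro m hm
      rcases Finset.mem_insert.1 hm with hm | hm
      · subst hm; rwa [hzi]
      rcases Finset.mem_insert.1 hm with hm | hm
      · subst hm; rwa [hzj]
      · rw [Finset.mem_singleton] at hm; subst hm; rwa [hzk]

/-- From a size-≤3 coalition in a weak block (with a strict improver `j`),
the `z`-cycle of `j` has length at most three; this extracts it. -/
lemma cycle_extract {S : Finset (Fin 10)} {z : Fin 10 → Fin 10}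
    (hcard : S.card ≤ 3) (hz : Function.Bijective z) (himg : S.image z = S)
    {j : Fin 10} (hj : j ∈ S) :
    (z j = j) ∨
    (z j ≠ j ∧ z (z j) = j) ∨
    (z j ≠ j ∧ z (z j) ≠ j ∧ z (z j) ≠ z j ∧ z (z (z j)) = j) := by
  have hmem : ∀ m ∈ S, z m ∈ S := by
    intro m hm; rw [← himg]; exact Finset.mem_image_of_mem z hm
  set b := z j with hb
  set c := z b with hc
  by_cases h1 : b = j
  · exact Or.inl h1
  by_cases h2 : c = j
  · exact Or.inr (Or.inl ⟨h1, h2⟩)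
  have hcb : c ≠ b := fun hcb => h1 (hz.1 (show z b = z j by rw [← hc, hcb, hb]))
  -- j, b, c distinct, all in S, so S = {j, b, c}
  have hbS : b ∈ S := hmem j hj
  have hcS : c ∈ S := hmem b hbS
  have hsub : ({j, b, c} : Finset (Fin 10)) ⊆ S := by
    intro m hm
    rcases Finset.mem_insert.1 hm with hm | hm
    · exact hm ▸ hj
    rcases Finset.mem_insert.1 hm with hm | hm
    · exact hm ▸ hbS
    · exact (Finset.mem_singleton.1 hm) ▸ hcS
  have hcard3 : ({j, b, c} : Finset (Fin 10)).card = 3 := by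
    rw [Finset.card_eq_three]
    refine ⟨j, b, c, ?_, ?_, ?_, rfl⟩ <;>
      first
      | exact Ne.symm h1
      | exact Ne.symm h2
      | exact Ne.symm hcb
  have hSeq : S = {j, b, c} := (Finset.eq_of_subset_of_card_le hsub (by omega)).symm
  have hzc : z c ∈ S := hmem c hcS
  rw [hSeq] at hzc
  rcases Finset.mem_insert.1 hzc with hm | hm
  · exact Or.inr (Or.inr ⟨h1, h2, hcb, hm⟩)
  rcases Finset.mem_insert.1 hm with hm | hm
  · exact absurd (hz.1 (hm.trans hb)) h2
  · rw [Finset.mem_singleton] at hm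
    exact absurd (hz.1 hm) hcb

lemma cycS_of_blocks3 {R : Fin 10 → Fin 10 → Fin 10 → Prop} {x : Fin 10 → Fin 10}
    (h : Blocks3 R x) : CycS R x := by
  obtain ⟨S, hpos, hcard, z, hz, himg, hblk⟩ := h
  obtain ⟨j, hj⟩ := Finset.card_pos.1 hpos
  have hmem : ∀ m ∈ S, z m ∈ S := by
    intro m hm; rw [← himg]; exact Finset.mem_image_of_mem z hm
  have hbS : z j ∈ S := hmem j hj
  have hcS : z (z j) ∈ S := hmem _ hbS
  rcases cycle_extract hcard hz himg hj with h1 | ⟨h1, h2⟩ | ⟨h1, h2, h3, h4⟩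
  · refine Or.inl ⟨j, ?_⟩
    have h := hblk j hj; rwa [h1] at h
  · refine Or.inr (Or.inl ⟨j, z j, Ne.symm h1, hblk j hj, ?_⟩)
    have h := hblk _ hbS; rwa [h2] at h
  · refine Or.inr (Or.inr ⟨j, z j, z (z j), Ne.symm h1, Ne.symm h3, Ne.symm h2,
      hblk j hj, hblk _ hbS, ?_⟩)
    have h := hblk _ hcS; rwa [h4] at h

lemma cycW_of_weaklyBlocks3 {R : Fin 10 → Fin 10 → Fin 10 → Prop} {x : Fin 10 → Fin 10}
    (h : WeaklyBlocks3 R x) : CycW R x := by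
  obtain ⟨S, hpos, hcard, z, hz, himg, hwk, j, hj, hstr⟩ := h
  have hmem : ∀ m ∈ S, z m ∈ S := by
    intro m hm; rw [← himg]; exact Finset.mem_image_of_mem z hm
  have hbS : z j ∈ S := hmem j hj
  have hcS : z (z j) ∈ S := hmem _ hbS
  rcases cycle_extract hcard hz himg hj with h1 | ⟨h1, h2⟩ | ⟨h1, h2, h3, h4⟩
  · refine Or.inl ⟨j, ?_⟩
    rwa [h1] at hstr
  · refine Or.inr (Or.inl ⟨j, z j, Ne.symm h1, hstr, ?_⟩)
    have h := hwk _ hbS; rwa [h2] at h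
  · refine Or.inr (Or.inr ⟨j, z j, z (z j), Ne.symm h1, Ne.symm h3, Ne.symm h2,
      hstr, hwk _ hbS, ?_⟩)
    have h := hwk _ hcS; rwa [h4] at h

lemma weaklyBlocks3_of_blocks3 {R : Fin 10 → Fin 10 → Fin 10 → Prop} {x : Fin 10 → Fin 10}
    (h : Blocks3 R x) : WeaklyBlocks3 R x := by
  obtain ⟨S, hpos, hcard, z, hz, himg, hblk⟩ := h
  obtain ⟨j, hj⟩ := Finset.card_pos.1 hpos
  exact ⟨S, hpos, hcard, z, hz, himg, fun i hi => (hblk i hi).1, j, hj, hblk j hj⟩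

lemma awBlocks3_of_blocks3 {R : Fin 10 → Fin 10 → Fin 10 → Prop} {x : Fin 10 → Fin 10}
    (h : Blocks3 R x) : AWBlocks3 R x := by
  obtain ⟨S, hpos, hcard, z, hz, himg, hblk⟩ := h
  obtain ⟨j, hj⟩ := Finset.card_pos.1 hpos
  exact ⟨S, hpos, hcard, z, hz, himg, fun i hi => (hblk i hi).1, ⟨j, hj, hblk j hj⟩,
    fun i hi hind => absurd hind.2 (hblk i hi).2⟩

lemma weaklyBlocks3_of_awBlocks3 {R : Fin 10 → Fin 10 → Fin 10 → Prop} {x : Fin 10 → Fin 10}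
    (h : AWBlocks3 R x) : WeaklyBlocks3 R x := by
  obtain ⟨S, hpos, hcard, z, hz, himg, hwk, hstr, _⟩ := h
  exact ⟨S, hpos, hcard, z, hz, himg, hwk, hstr⟩

/-- Individual rationality of core allocations. -/
lemma ir_of_not_blocks3 {R : Fin 10 → Fin 10 → Fin 10 → Prop} (htot : TotalPref R)
    {x : Fin 10 → Fin 10} (hnb : ¬ Blocks3 R x) : ∀ i, R i (x i) i := by
  intro i
  by_contra hno
  rcases htot i (x i) i with h | h
  · exact hno h
  · exact hnb (blocks3_of_cycS (Or.inl ⟨i, h, hno⟩))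

lemma vec_eq_self (x : Fin 10 → Fin 10) :
    ![x 0, x 1, x 2, x 3, x 4, x 5, x 6, x 7, x 8, x 9] = x := by
  funext i
  fin_cases i <;> rfl

/-- Characterization of the 3-core of `Rr`. -/
lemma coreR_char {x : Fin 10 → Fin 10} (hx : InCore3 Rr x) : x = xA ∨ x = xB := by
  obtain ⟨⟨hbij, h3⟩, hnb⟩ := hx
  have htot : TotalPref Rr := fun i a b => Nat.le_total (uR i b) (uR i a)
  have hir : ∀ i, Rr i (x i) i := ir_of_not_blocks3 htot hnb
  have hne : ∀ (a b : Fin 10), a ≠ b → x a ≠ x b := by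
    intro a b hab he; exact hab (hbij.1 he)
  have hD := D_Rr ⟨x 0, hir 0⟩ ⟨x 1, hir 1⟩
  rcases hD with h | hD; · exact absurd h (hne 1 0 (by decide))
  have hD := hD ⟨x 2, hir 2⟩
  rcases hD with (h | h) | hD
  · exact absurd h (hne 2 0 (by decide))
  · exact absurd h (hne 2 1 (by decide))
  have hD := hD ⟨x 3, hir 3⟩
  rcases hD with (h | h | h) | hD
  · exact absurd h (hne 3 0 (by decide))
  · exact absurd h (hne 3 1 (by decide))
  · exact absurd h (hne 3 2 (by decide))
  have hD := hD ⟨x 4, hir 4⟩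
  rcases hD with (h | h | h | h) | hD
  · exact absurd h (hne 4 0 (by decide))
  · exact absurd h (hne 4 1 (by decide))
  · exact absurd h (hne 4 2 (by decide))
  · exact absurd h (hne 4 3 (by decide))
  have hD := hD ⟨x 5, hir 5⟩
  rcases hD with (h | h | h | h | h) | hD
  · exact absurd h (hne 5 0 (by decide))
  · exact absurd h (hne 5 1 (by decide))
  · exact absurd h (hne 5 2 (by decide))
  · exact absurd h (hne 5 3 (by decide))
  · exact absurd h (hne 5 4 (by decide))
  have hD := hD ⟨x 6, hir 6⟩
  rcases hD with (h | h | h | h | h | h) | hD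
  · exact absurd h (hne 6 0 (by decide))
  · exact absurd h (hne 6 1 (by decide))
  · exact absurd h (hne 6 2 (by decide))
  · exact absurd h (hne 6 3 (by decide))
  · exact absurd h (hne 6 4 (by decide))
  · exact absurd h (hne 6 5 (by decide))
  have hD := hD ⟨x 7, hir 7⟩
  rcases hD with (h | h | h | h | h | h | h) | hD
  · exact absurd h (hne 7 0 (by decide))
  · exact absurd h (hne 7 1 (by decide))
  · exact absurd h (hne 7 2 (by decide))
  · exact absurd h (hne 7 3 (by decide))
  · exact absurd h (hne 7 4 (by decide))
  · exact absurd h (hne 7 5 (by decide))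
  · exact absurd h (hne 7 6 (by decide))
  have hD := hD ⟨x 8, hir 8⟩
  rcases hD with (h | h | h | h | h | h | h | h) | hD
  · exact absurd h (hne 8 0 (by decide))
  · exact absurd h (hne 8 1 (by decide))
  · exact absurd h (hne 8 2 (by decide))
  · exact absurd h (hne 8 3 (by decide))
  · exact absurd h (hne 8 4 (by decide))
  · exact absurd h (hne 8 5 (by decide))
  · exact absurd h (hne 8 6 (by decide))
  · exact absurd h (hne 8 7 (by decide))
  have hD := hD ⟨x 9, hir 9⟩
  rcases hD with (h | h | h | h | h | h | h | h | h) | hD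
  · exact absurd h (hne 9 0 (by decide))
  · exact absurd h (hne 9 1 (by decide))
  · exact absurd h (hne 9 2 (by decide))
  · exact absurd h (hne 9 3 (by decide))
  · exact absurd h (hne 9 4 (by decide))
  · exact absurd h (hne 9 5 (by decide))
  · exact absurd h (hne 9 6 (by decide))
  · exact absurd h (hne 9 7 (by decide))
  · exact absurd h (hne 9 8 (by decide))
  rw [vec_eq_self x] at hD
  rcases hD with h | h | h | h
  · exact Or.inl h
  · exact Or.inr h
  · exact absurd h3 h
  · exact absurd (blocks3_of_cycS h) hnb

/-- Characterization of the 3-core of `Rp`. -/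
lemma coreP_char {x : Fin 10 → Fin 10} (hx : InCore3 Rp x) : x = xB := by
  obtain ⟨⟨hbij, h3⟩, hnb⟩ := hx
  have htot : TotalPref Rp := fun i a b => Nat.le_total (uRp i b) (uRp i a)
  have hir : ∀ i, Rp i (x i) i := ir_of_not_blocks3 htot hnb
  have hne : ∀ (a b : Fin 10), a ≠ b → x a ≠ x b := by
    intro a b hab he; exact hab (hbij.1 he)
  have hD := D_Rp ⟨x 0, hir 0⟩ ⟨x 1, hir 1⟩
  rcases hD with h | hD; · exact absurd h (hne 1 0 (by decide))
  have hD := hD ⟨x 2, hir 2⟩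
  rcases hD with (h | h) | hD
  · exact absurd h (hne 2 0 (by decide))
  · exact absurd h (hne 2 1 (by decide))
  have hD := hD ⟨x 3, hir 3⟩
  rcases hD with (h | h | h) | hD
  · exact absurd h (hne 3 0 (by decide))
  · exact absurd h (hne 3 1 (by decide))
  · exact absurd h (hne 3 2 (by decide))
  have hD := hD ⟨x 4, hir 4⟩
  rcases hD with (h | h | h | h) | hD
  · exact absurd h (hne 4 0 (by decide))
  · exact absurd h (hne 4 1 (by decide))
  · exact absurd h (hne 4 2 (by decide))
  · exact absurd h (hne 4 3 (by decide))
  have hD := hD ⟨x 5, hir 5⟩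
  rcases hD with (h | h | h | h | h) | hD
  · exact absurd h (hne 5 0 (by decide))
  · exact absurd h (hne 5 1 (by decide))
  · exact absurd h (hne 5 2 (by decide))
  · exact absurd h (hne 5 3 (by decide))
  · exact absurd h (hne 5 4 (by decide))
  have hD := hD ⟨x 6, hir 6⟩
  rcases hD with (h | h | h | h | h | h) | hD
  · exact absurd h (hne 6 0 (by decide))
  · exact absurd h (hne 6 1 (by decide))
  · exact absurd h (hne 6 2 (by decide))
  · exact absurd h (hne 6 3 (by decide))
  · exact absurd h (hne 6 4 (by decide))
  · exact absurd h (hne 6 5 (by decide))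
  have hD := hD ⟨x 7, hir 7⟩
  rcases hD with (h | h | h | h | h | h | h) | hD
  · exact absurd h (hne 7 0 (by decide))
  · exact absurd h (hne 7 1 (by decide))
  · exact absurd h (hne 7 2 (by decide))
  · exact absurd h (hne 7 3 (by decide))
  · exact absurd h (hne 7 4 (by decide))
  · exact absurd h (hne 7 5 (by decide))
  · exact absurd h (hne 7 6 (by decide))
  have hD := hD ⟨x 8, hir 8⟩
  rcases hD with (h | h | h | h | h | h | h | h) | hD
  · exact absurd h (hne 8 0 (by decide))
  · exact absurd h (hne 8 1 (by decide))
  · exact absurd h (hne 8 2 (by decide))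
  · exact absurd h (hne 8 3 (by decide))
  · exact absurd h (hne 8 4 (by decide))
  · exact absurd h (hne 8 5 (by decide))
  · exact absurd h (hne 8 6 (by decide))
  · exact absurd h (hne 8 7 (by decide))
  have hD := hD ⟨x 9, hir 9⟩
  rcases hD with (h | h | h | h | h | h | h | h | h) | hD
  · exact absurd h (hne 9 0 (by decide))
  · exact absurd h (hne 9 1 (by decide))
  · exact absurd h (hne 9 2 (by decide))
  · exact absurd h (hne 9 3 (by decide))
  · exact absurd h (hne 9 4 (by decide))
  · exact absurd h (hne 9 5 (by decide))
  · exact absurd h (hne 9 6 (by decide))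
  · exact absurd h (hne 9 7 (by decide))
  · exact absurd h (hne 9 8 (by decide))
  rw [vec_eq_self x] at hD
  rcases hD with h | h | h
  · exact h
  · exact absurd h3 h
  · exact absurd (blocks3_of_cycS h) hnb

lemma noCycW_xA : ¬ CycW Rr xA := by decide
lemma noCycW_xB : ¬ CycW Rr xB := by decide
lemma noCycWp_xB : ¬ CycW Rp xB := by decide

lemma is3alloc_xA : Is3Alloc xA := by
  constructor
  · decide
  · decide

lemma is3alloc_xB : Is3Alloc xB := by
  constructor
  · decide
  · decide

lemma core_xA : InCore3 Rr xA :=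
  ⟨is3alloc_xA, fun hb => noCycW_xA (cycW_of_weaklyBlocks3 (weaklyBlocks3_of_blocks3 hb))⟩

lemma core_xB : InCore3 Rr xB :=
  ⟨is3alloc_xB, fun hb => noCycW_xB (cycW_of_weaklyBlocks3 (weaklyBlocks3_of_blocks3 hb))⟩

lemma corep_xB : InCore3 Rp xB :=
  ⟨is3alloc_xB, fun hb => noCycWp_xB (cycW_of_weaklyBlocks3 (weaklyBlocks3_of_blocks3 hb))⟩

lemma main_result :
    ∃ (R R' : Fin 10 → Fin 10 → Fin 10 → Prop) (i : Fin 10),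
      TotalPref R ∧ TransPref R ∧ StrictPrefs R ∧
      TotalPref R' ∧ TransPref R' ∧ StrictPrefs R' ∧
      Improvement R R' i ∧
      (∀ x, InCore3 R x ↔ InStrongCore3 R x) ∧
      (∀ x, InCore3 R x ↔ InWakoCore3 R x) ∧
      (∃ x, InCore3 R x) ∧
      (∀ x, InCore3 R' x ↔ InStrongCore3 R' x) ∧
      (∀ x, InCore3 R' x ↔ InWakoCore3 R' x) ∧
      (∃ x, InCore3 R' x) ∧
      ∃ x, InCore3 R x ∧ ∀ x', InCore3 R' x' → SPref R i (x i) (x' i) := by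
  refine ⟨Rr, Rp, 0, ?_, ?_, ?_, ?_, ?_, ?_, ?_, ?_, ?_, ?_, ?_, ?_, ?_, ?_⟩
  · exact fun i a b => Nat.le_total (uR i b) (uR i a)
  · exact fun i a b c h1 h2 => Nat.le_trans h2 h1
  · unfold StrictPrefs; decide
  · exact fun i a b => Nat.le_total (uRp i b) (uRp i a)
  · exact fun i a b c h1 h2 => Nat.le_trans h2 h1
  · unfold StrictPrefs; decide
  · refine ⟨by decide, by decide, by decide⟩
  · -- core R = strong core R
    intro x
    constructor
    · intro hx
      refine ⟨hx.1, fun hw => ?_⟩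
      rcases coreR_char hx with h | h
      · subst h; exact noCycW_xA (cycW_of_weaklyBlocks3 hw)
      · subst h; exact noCycW_xB (cycW_of_weaklyBlocks3 hw)
    · intro ⟨h3, hnw⟩
      exact ⟨h3, fun hb => hnw (weaklyBlocks3_of_blocks3 hb)⟩
  · -- core R = Wako core R
    intro x
    constructor
    · intro hx
      refine ⟨hx.1, fun hw => ?_⟩
      rcases coreR_char hx with h | h
      · subst h; exact noCycW_xA (cycW_of_weaklyBlocks3 (weaklyBlocks3_of_awBlocks3 hw))
      · subst h; exact noCycW_xB (cycW_of_weaklyBlocks3 (weaklyBlocks3_of_awBlocks3 hw))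
    · intro ⟨h3, hnw⟩
      exact ⟨h3, fun hb => hnw (awBlocks3_of_blocks3 hb)⟩
  · exact ⟨xA, core_xA⟩
  · -- core R' = strong core R'
    intro x
    constructor
    · intro hx
      refine ⟨hx.1, fun hw => ?_⟩
      have h := coreP_char hx
      subst h; exact noCycWp_xB (cycW_of_weaklyBlocks3 hw)
    · intro ⟨h3, hnw⟩
      exact ⟨h3, fun hb => hnw (weaklyBlocks3_of_blocks3 hb)⟩
  · -- core R' = Wako core R'
    intro x
    constructor
    · intro hx
      refine ⟨hx.1, fun hw => ?_⟩
      have h := coreP_char hx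
      subst h; exact noCycWp_xB (cycW_of_weaklyBlocks3 (weaklyBlocks3_of_awBlocks3 hw))
    · intro ⟨h3, hnw⟩
      exact ⟨h3, fun hb => hnw (awBlocks3_of_blocks3 hb)⟩
  · exact ⟨xB, corep_xB⟩
  · refine ⟨xA, core_xA, fun x' hx' => ?_⟩
    have h := coreP_char hx'
    subst h
    decide

end Aux

/-- For exchanges of length at most 3, the (strong/Wako-) core does not respect
improvement in best allotments: there are 3-housing markets with strict
preferences in which the three cores coincide and are nonempty, `R'` improves
agent `i`, yet `i`'s best core allotment under `R` is strictly preferred to her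
best core allotment under `R'`. -/
theorem bounded_cores_violate_respecting_improvement :
    ∃ (R R' : Fin 10 → Fin 10 → Fin 10 → Prop) (i : Fin 10),
      TotalPref R ∧ TransPref R ∧ StrictPrefs R ∧
      TotalPref R' ∧ TransPref R' ∧ StrictPrefs R' ∧
      Improvement R R' i ∧
      (∀ x, InCore3 R x ↔ InStrongCore3 R x) ∧
      (∀ x, InCore3 R x ↔ InWakoCore3 R x) ∧
      (∃ x, InCore3 R x) ∧
      (∀ x, InCore3 R' x ↔ InStrongCore3 R' x) ∧
      (∀ x, InCore3 R' x ↔ InWakoCore3 R' x) ∧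
      (∃ x, InCore3 R' x) ∧
      ∃ x, InCore3 R x ∧ ∀ x', InCore3 R' x' → SPref R i (x i) (x' i) := by
  exact main_result
end
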